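/- arXiv:math/0611639 — 2 statements merged into one kernel-verified Lean document; each statement's English description precedes it below -/
import Mathlib

section
/- Let n ≥ 1, let M be a nonnegative integer, and let a_1,…,a_n, u_1,…,u_n be nonzero complex numbers such that no denominator below vanishes. Then ∑_{k∈ℕ^n, |k|=M} [∏_{1≤i<j≤n} (u_i q^{k_i} − u_j q^{k_j})/(u_i − u_j)] · [∏_{i,j=1}^n (a_j u_i/u_j;q)_{k_i}/(q u_i/u_j;q)_{k_i}] = (a_1 a_2 ⋯ a_n;q)_M / (q;q)_M. -/
open scoped BigOperators
open Finset

/-- The `q`-shifted factorial `(a;q)_k` for an arbitrary integer index `k`: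
for `k ≥ 0` it is `∏_{j=0}^{k-1} (1 - a q^j)`, and for `k < 0` it is
`1 / ∏_{j=1}^{-k} (1 - a q^{-j})`. -/
noncomputable def qPoch (q a : ℂ) : ℤ → ℂ := fun k =>
  if 0 ≤ k then ∏ j ∈ Finset.range k.toNat, (1 - a * q ^ j)
  else (∏ j ∈ Finset.range (-k).toNat, (1 - a * q ^ (-1 - (j : ℤ))))⁻¹

noncomputable def qp (q A : ℂ) (m : ℕ) : ℂ := ∏ j ∈ Finset.range m, (1 - A * q ^ j)

lemma qPoch_natCast (q A : ℂ) (m : ℕ) : qPoch q A (m : ℤ) = qp q A m := by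
  simp [qPoch, qp]

lemma qp_succ (q A : ℂ) (m : ℕ) : qp q A (m + 1) = qp q A m * (1 - A * q ^ m) :=
  Finset.prod_range_succ _ _

section Lagrange
open Polynomial

lemma basis_coeff {n : ℕ} (v : Option (Fin n) → ℂ) (o : Option (Fin n)) :
    (Lagrange.basis univ v o).coeff n = (∏ j ∈ univ.erase o, (v o - v j))⁻¹ := by
  classical
  have hcard : ((univ : Finset (Option (Fin n))).erase o).card = n := by
    rw [card_erase_of_mem (mem_univ o)]; simp [Fintype.card_option]
  have h1 : Lagrange.basis univ v o
      = C (∏ j ∈ univ.erase o, (v o - v j)⁻¹) * ∏ j ∈ univ.erase o, (X - C (v j)) := by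
    rw [Lagrange.basis]
    simp_rw [Lagrange.basisDivisor]
    rw [prod_mul_distrib, ← map_prod]
  rw [h1, coeff_C_mul]
  have hm : (∏ j ∈ univ.erase o, (X - C (v j))).Monic :=
    monic_prod_of_monic _ _ fun _ _ => monic_X_sub_C _
  have hdeg : (∏ j ∈ univ.erase o, (X - C (v j))).natDegree = n := by
    rw [natDegree_prod_of_monic _ _ fun _ _ => monic_X_sub_C _]
    simp [natDegree_X_sub_C, hcard]
  have hc := hm.coeff_natDegree
  rw [hdeg] at hc
  rw [hc, mul_one, ← prod_inv_distrib]

lemma lagrange_key {n : ℕ} (x c : Fin n → ℂ) (hx0 : ∀ i, x i ≠ 0)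
    (hxne : ∀ i j : Fin n, i ≠ j → x i ≠ x j) :
    ∑ i : Fin n, (∏ j : Fin n, (x i - c j)) / (x i * ∏ j ∈ univ.erase i, (x i - x j))
      = 1 - (∏ j, c j) / ∏ j, x j := by
  classical
  set v : Option (Fin n) → ℂ := fun o => o.elim 0 x with hv
  have hvinj : Function.Injective v := by
    intro o1 o2 h
    match o1, o2 with
    | none, none => rfl
    | none, some j => exact absurd h.symm (hx0 j)
    | some i, none => exact absurd h (hx0 i)
    | some i, some j =>
      by_cases hij : i = j
      · exact congrArg some hij
      · exact absurd h (hxne i j hij)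
  have hvs : Set.InjOn v (univ : Finset (Option (Fin n))) := Function.Injective.injOn hvinj
  set P : Polynomial ℂ := ∏ j : Fin n, (X - C (c j)) with hP
  have hPm : P.Monic := monic_prod_of_monic _ _ fun _ _ => monic_X_sub_C _
  have hPdeg : P.natDegree = n := by
    rw [hP, natDegree_prod_of_monic _ _ fun _ _ => monic_X_sub_C _]
    simp [natDegree_X_sub_C]
  have hcard : (univ : Finset (Option (Fin n))).card = n + 1 := by
    simp [Fintype.card_option]
  have hdeg : P.degree < (univ : Finset (Option (Fin n))).card := by
    rw [hcard]
    calc P.degree ≤ P.natDegree := degree_le_natDegree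
    _ < ((n+1 : ℕ) : WithBot ℕ) := by
        rw [hPdeg]; exact_mod_cast Nat.lt_succ_self n
  have hint := Lagrange.eq_interpolate (v := v) hvs hdeg
  -- take coeff n on both sides
  have hco : P.coeff n = 1 := by
    have := hPm.coeff_natDegree
    rwa [hPdeg] at this
  have hco2 : P.coeff n
      = ∑ o : Option (Fin n), P.eval (v o) * (∏ j ∈ univ.erase o, (v o - v j))⁻¹ := by
    conv_lhs => rw [hint]
    rw [Lagrange.interpolate_apply, finset_sum_coeff]
    refine Finset.sum_congr rfl fun o _ => ?_
    rw [coeff_C_mul, basis_coeff]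
  rw [hco] at hco2
  rw [Fintype.sum_option] at hco2
  -- evaluate the `none` term
  have hAset : (univ : Finset (Option (Fin n))).erase none = univ.image some := by
    ext o; cases o <;> simp
  have hnone : P.eval (v none) * (∏ j ∈ (univ : Finset (Option (Fin n))).erase none,
      (v none - v j))⁻¹ = (∏ j, c j) / (∏ j, x j) := by
    have h2 : ∏ j ∈ (univ : Finset (Option (Fin n))).erase none, (v none - v j)
        = ∏ j : Fin n, (0 - x j) := by
      rw [hAset, prod_image (fun a _ b _ h => Option.some_injective _ h)]
      rfl
    have h3 : P.eval (v none) = ∏ j : Fin n, (0 - c j) := by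
      simp [hP, eval_prod, hv]
    rw [h2, h3]
    have e1 : ∏ j : Fin n, (0 - c j) = (-1)^n * ∏ j, c j := by
      have h : ∀ j : Fin n, (0 : ℂ) - c j = (-1) * c j := fun j => by ring
      rw [Finset.prod_congr rfl (fun j _ => h j), Finset.prod_mul_distrib]; simp
    have e2 : ∏ j : Fin n, (0 - x j) = (-1)^n * ∏ j, x j := by
      have h : ∀ j : Fin n, (0 : ℂ) - x j = (-1) * x j := fun j => by ring
      rw [Finset.prod_congr rfl (fun j _ => h j), Finset.prod_mul_distrib]; simp
    have hne : ((-1 : ℂ))^n ≠ 0 := by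
      apply pow_ne_zero; norm_num
    rw [e1, e2, mul_inv]
    rw [div_eq_mul_inv]
    calc (-1 : ℂ)^n * (∏ j, c j) * (((-1 : ℂ)^n)⁻¹ * (∏ j, x j)⁻¹)
        = ((-1 : ℂ)^n * ((-1 : ℂ)^n)⁻¹) * ((∏ j, c j) * (∏ j, x j)⁻¹) := by ring
      _ = (∏ j, c j) * (∏ j, x j)⁻¹ := by rw [mul_inv_cancel₀ hne, one_mul]
  have hsome : ∀ i : Fin n, P.eval (v (some i)) * (∏ j ∈ (univ : Finset (Option (Fin n))).erase (some i), (v (some i) - v j))⁻¹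
      = (∏ j : Fin n, (x i - c j)) / (x i * ∏ j ∈ univ.erase i, (x i - x j)) := by
    intro i
    have hBset : (univ : Finset (Option (Fin n))).erase (some i)
        = insert none ((univ.erase i).image some) := by
      ext o; cases o <;> simp
    have h2 : ∏ j ∈ (univ : Finset (Option (Fin n))).erase (some i), (v (some i) - v j)
        = x i * ∏ j ∈ univ.erase i, (x i - x j) := by
      rw [hBset, prod_insert (by simp), prod_image (fun a _ b _ h => Option.some_injective _ h)]
      simp [hv]
    have h3 : P.eval (v (some i)) = ∏ j : Fin n, (x i - c j) := by
      simp [hP, eval_prod, hv]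
    rw [h2, h3, div_eq_mul_inv]
  rw [hnone] at hco2
  rw [Finset.sum_congr rfl (fun i _ => hsome i)] at hco2
  linear_combination -hco2

end Lagrange

namespace Milne

variable {n : ℕ} (q : ℂ) (a u : Fin n → ℂ)

/-- The summand. -/
noncomputable def term (k : Fin n → ℕ) : ℂ :=
  (∏ i : Fin n, ∏ j ∈ Finset.Ioi i,
      (u i * q ^ (k i) - u j * q ^ (k j)) / (u i - u j)) *
    ∏ i : Fin n, ∏ j : Fin n,
      qp q (a j * u i / u j) (k i) / qp q (q * u i / u j) (k i)

noncomputable def gfun (k : Fin n → ℕ) (i : Fin n) : ℂ :=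
  (1 - q ^ (k i)) * q ^ (∑ j, k j - k i) *
    ∏ j ∈ univ.erase i, ((u i * q ^ (k i) - u j) / (u i * q ^ (k i) - u j * q ^ (k j)))

noncomputable def hfun (k : Fin n → ℕ) (i : Fin n) : ℂ :=
  (-((∏ j, a j) * q ^ (∑ j, k j))) *
    ((∏ j, (u i * q ^ (k i) - u j / a j)) /
      (u i * q ^ (k i) * ∏ j ∈ univ.erase i, (u i * q ^ (k i) - u j * q ^ (k j))))

def bump (i : Fin n) (k : Fin n → ℕ) : Fin n → ℕ := Function.update k i (k i + 1)

section hyps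

variable (hq0 : q ≠ 0) (hq1 : ‖q‖ < 1)
variable (ha : ∀ i, a i ≠ 0) (hu : ∀ i, u i ≠ 0)
variable (hgen : ∀ i j : Fin n, i ≠ j → ∀ r : ℤ, u i ≠ q ^ r * u j)

include hq1 in
lemma pow_ne_one : ∀ m : ℕ, q ^ (m + 1) ≠ 1 := by
  intro m h
  have : ‖q ^ (m+1)‖ < 1 := by
    rw [norm_pow]
    exact pow_lt_one₀ (norm_nonneg q) hq1 (Nat.succ_ne_zero m)
  rw [h] at this
  simp at this

include hq0 hgen in
lemma x_ne (i j : Fin n) (hij : i ≠ j) (s t : ℕ) : u i * q ^ s ≠ u j * q ^ t := by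
  intro h
  apply hgen i j hij ((t : ℤ) - (s : ℤ))
  have hqs : (q : ℂ) ^ s ≠ 0 := pow_ne_zero _ hq0
  rw [zpow_sub₀ hq0, zpow_natCast, zpow_natCast, div_mul_eq_mul_div, eq_div_iff hqs]
  linear_combination h

include hq0 hu in
lemma x_ne_zero (i : Fin n) (s : ℕ) : u i * q ^ s ≠ 0 :=
  mul_ne_zero (hu i) (pow_ne_zero _ hq0)

include hq0 hq1 hu hgen in
lemma den_q_ne (i j : Fin n) (s : ℕ) : (1 : ℂ) - (q * u i / u j) * q ^ s ≠ 0 := by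
  intro h
  have expand : u j * (1 - q * u i / u j * q ^ s) = u j - q * u i * q ^ s := by
    field_simp [hu j]
  have h4 : u j - q * u i * q ^ s = 0 := by rw [← expand, h, mul_zero]
  have h2 : u j = u i * q ^ (s + 1) := by
    have h5 := sub_eq_zero.mp h4
    rw [h5]; ring
  by_cases hij : i = j
  · subst hij
    have h6 : u i * 1 = u i * q ^ (s + 1) := by rw [mul_one]; exact h2
    have h7 := mul_left_cancel₀ (hu i) h6
    exact pow_ne_one q hq1 s h7.symm
  · refine x_ne q u hq0 hgen j i (fun hh => hij hh.symm) 0 (s+1) ?_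
    rw [pow_zero, mul_one]
    exact h2


include hq0 hq1 hu hgen in
lemma qp_den_ne (i j : Fin n) (m : ℕ) : qp q (q * u i / u j) m ≠ 0 := by
  rw [qp]
  rw [Finset.prod_ne_zero_iff]
  intro s _
  exact den_q_ne q u hq0 hq1 hu hgen i j s

include hq0 hgen in
lemma u_sub_ne (i j : Fin n) (hij : i ≠ j) : u i - u j ≠ 0 := by
  rw [sub_ne_zero]
  intro h
  exact x_ne q u hq0 hgen i j hij 0 0 (by rw [pow_zero, mul_one, mul_one, h])

include hq1 in
lemma qp_qq_ne (m : ℕ) : qp q q m ≠ 0 := by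
  rw [qp, Finset.prod_ne_zero_iff]
  intro s _
  intro h
  apply pow_ne_one q hq1 s
  have := sub_eq_zero.mp h
  rw [pow_succ']
  linear_combination -this

include hq0 hgen hu in
lemma xx_sub_ne (i j : Fin n) (hij : i ≠ j) (s t : ℕ) : u i * q ^ s - u j * q ^ t ≠ 0 := by
  rw [sub_ne_zero]
  exact x_ne q u hq0 hgen i j hij s t

end hyps

/-! ### Vandermonde product manipulation -/

lemma W_split (y : Fin n → ℂ) (i : Fin n) :
    ∏ i' : Fin n, ∏ j ∈ Ioi i', (y i' - y j)
    = ((∏ j ∈ Iio i, (y j - y i)) * ∏ j ∈ Ioi i, (y i - y j)) *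
      ∏ i' ∈ univ.erase i, ∏ j ∈ (Ioi i').erase i, (y i' - y j) := by
  classical
  rw [← Finset.mul_prod_erase univ _ (mem_univ i)]
  have hstep : ∀ i' ∈ univ.erase i,
      (∏ j ∈ Ioi i', (y i' - y j))
      = (if i ∈ Ioi i' then (y i' - y i) else 1) * ∏ j ∈ (Ioi i').erase i, (y i' - y j) := by
    intro i' _
    by_cases h : i ∈ Ioi i'
    · rw [if_pos h]; exact (Finset.mul_prod_erase _ _ h).symm
    · rw [if_neg h, one_mul, Finset.erase_eq_of_notMem h]
  rw [Finset.prod_congr rfl hstep, Finset.prod_mul_distrib]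
  have hfilt : ∏ i' ∈ univ.erase i, (if i ∈ Ioi i' then (y i' - y i) else 1)
      = ∏ j ∈ Iio i, (y j - y i) := by
    rw [← Finset.prod_filter]
    congr 1
    ext i'
    simp only [mem_filter, mem_erase, mem_Ioi, mem_Iio, mem_univ, true_and]
    constructor
    · rintro ⟨_, h2⟩; exact h2
    · intro h2; exact ⟨⟨ne_of_lt h2, trivial⟩, h2⟩
  rw [hfilt]
  ring


lemma erase_eq_Iio_union_Ioi (i : Fin n) :
    (univ : Finset (Fin n)).erase i = Iio i ∪ Ioi i := by
  ext j
  simp only [mem_erase, mem_univ, and_true, mem_union, mem_Iio, mem_Ioi]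
  constructor
  · intro h; exact lt_or_gt_of_ne h
  · intro h; rcases h with h | h
    · exact ne_of_lt h
    · exact ne_of_gt h

lemma prod_erase_split (i : Fin n) (f : Fin n → ℂ) :
    ∏ j ∈ univ.erase i, f j = (∏ j ∈ Iio i, f j) * ∏ j ∈ Ioi i, f j := by
  rw [erase_eq_Iio_union_Ioi, Finset.prod_union]
  exact Finset.disjoint_left.mpr (fun j hj hj2 => absurd (mem_Ioi.mp hj2)
    (not_lt_of_gt (mem_Iio.mp hj)))

lemma W_ratio (x : Fin n → ℂ) (z : ℂ) (i : Fin n) :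
    (∏ i' : Fin n, ∏ j ∈ Ioi i',
        (Function.update x i z i' - Function.update x i z j)) *
      ∏ j ∈ univ.erase i, (x i - x j)
    = (∏ i' : Fin n, ∏ j ∈ Ioi i', (x i' - x j)) * ∏ j ∈ univ.erase i, (z - x j) := by
  classical
  rw [W_split _ i, W_split x i]
  have hR : ∏ i' ∈ univ.erase i, ∏ j ∈ (Ioi i').erase i,
        (Function.update x i z i' - Function.update x i z j)
      = ∏ i' ∈ univ.erase i, ∏ j ∈ (Ioi i').erase i, (x i' - x j) := by
    refine Finset.prod_congr rfl fun i' hi' => Finset.prod_congr rfl fun j hj => ?_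
    rw [Function.update_of_ne (Finset.mem_erase.mp hi').1,
        Function.update_of_ne (Finset.mem_erase.mp hj).1]
  have hIio : ∏ j ∈ Iio i, (Function.update x i z j - Function.update x i z i)
      = ∏ j ∈ Iio i, (x j - z) := by
    refine Finset.prod_congr rfl fun j hj => ?_
    rw [Function.update_of_ne (ne_of_lt (mem_Iio.mp hj)), Function.update_self]
  have hIoi : ∏ j ∈ Ioi i, (Function.update x i z i - Function.update x i z j)
      = ∏ j ∈ Ioi i, (z - x j) := by
    refine Finset.prod_congr rfl fun j hj => ?_
    rw [Function.update_of_ne (ne_of_gt (mem_Ioi.mp hj)), Function.update_self]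
  rw [hR, hIio, hIoi, prod_erase_split i (fun j => x i - x j),
    prod_erase_split i (fun j => z - x j)]
  have key : (∏ j ∈ Iio i, (x j - z)) * (∏ j ∈ Iio i, (x i - x j))
      = (∏ j ∈ Iio i, (x j - x i)) * (∏ j ∈ Iio i, (z - x j)) := by
    rw [← Finset.prod_mul_distrib, ← Finset.prod_mul_distrib]
    exact Finset.prod_congr rfl fun j _ => by ring
  linear_combination ((∏ j ∈ Ioi i, (z - x j)) * (∏ j ∈ Ioi i, (x i - x j)) *
    (∏ i' ∈ univ.erase i, ∏ j ∈ (Ioi i').erase i, (x i' - x j))) * key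

lemma V_ratio (u : Fin n → ℂ) (x : Fin n → ℂ) (z : ℂ) (i : Fin n) :
    (∏ i' : Fin n, ∏ j ∈ Ioi i',
        (Function.update x i z i' - Function.update x i z j) / (u i' - u j)) *
      ∏ j ∈ univ.erase i, (x i - x j)
    = (∏ i' : Fin n, ∏ j ∈ Ioi i', (x i' - x j) / (u i' - u j)) *
      ∏ j ∈ univ.erase i, (z - x j) := by
  have hsplit : ∀ y : Fin n → ℂ,
      ∏ i' : Fin n, ∏ j ∈ Ioi i', (y i' - y j) / (u i' - u j)
      = (∏ i' : Fin n, ∏ j ∈ Ioi i', (y i' - y j)) *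
        (∏ i' : Fin n, ∏ j ∈ Ioi i', (u i' - u j))⁻¹ := by
    intro y
    simp_rw [div_eq_mul_inv, Finset.prod_mul_distrib, Finset.prod_inv_distrib]
  rw [hsplit, hsplit]
  linear_combination (∏ i' : Fin n, ∏ j ∈ Ioi i', (u i' - u j))⁻¹ * W_ratio x z i

section hyps2

variable (hq0 : q ≠ 0) (hq1 : ‖q‖ < 1)
variable (ha : ∀ i, a i ≠ 0) (hu : ∀ i, u i ≠ 0)
variable (hgen : ∀ i j : Fin n, i ≠ j → ∀ r : ℤ, u i ≠ q ^ r * u j)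

lemma bump_apply_self (i : Fin n) (k : Fin n → ℕ) : bump i k i = k i + 1 := by
  simp [bump]

lemma bump_apply_ne (i j : Fin n) (k : Fin n → ℕ) (h : j ≠ i) : bump i k j = k j := by
  simp [bump, Function.update_of_ne h]

include hq0 hq1 hu hgen in
lemma P_ratio (k : Fin n → ℕ) (i : Fin n) :
    (∏ i' : Fin n, ∏ j : Fin n,
        qp q (a j * u i' / u j) (bump i k i') / qp q (q * u i' / u j) (bump i k i')) *
      ∏ j : Fin n, (1 - (q * u i / u j) * q ^ (k i))
    = (∏ i' : Fin n, ∏ j : Fin n,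
        qp q (a j * u i' / u j) (k i') / qp q (q * u i' / u j) (k i')) *
      ∏ j : Fin n, (1 - (a j * u i / u j) * q ^ (k i)) := by
  classical
  have hrow : (fun i' => ∏ j : Fin n,
        qp q (a j * u i' / u j) (bump i k i') / qp q (q * u i' / u j) (bump i k i'))
      = Function.update (fun i' => ∏ j : Fin n,
          qp q (a j * u i' / u j) (k i') / qp q (q * u i' / u j) (k i')) i
        (∏ j : Fin n, qp q (a j * u i / u j) (k i + 1) / qp q (q * u i / u j) (k i + 1)) := by
    funext i'
    by_cases h : i' = i
    · subst h
      rw [Function.update_self, bump_apply_self]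
    · rw [Function.update_of_ne h, bump_apply_ne _ _ _ h]
  rw [hrow, Finset.prod_update_of_mem (mem_univ i), Finset.sdiff_singleton_eq_erase,
    ← Finset.mul_prod_erase univ
      (fun i' => ∏ j : Fin n, qp q (a j * u i' / u j) (k i') / qp q (q * u i' / u j) (k i'))
      (mem_univ i)]
  have hkey : (∏ j : Fin n, qp q (a j * u i / u j) (k i + 1) / qp q (q * u i / u j) (k i + 1)) *
      ∏ j : Fin n, (1 - (q * u i / u j) * q ^ (k i))
      = (∏ j : Fin n, qp q (a j * u i / u j) (k i) / qp q (q * u i / u j) (k i)) *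
      ∏ j : Fin n, (1 - (a j * u i / u j) * q ^ (k i)) := by
    rw [← Finset.prod_mul_distrib, ← Finset.prod_mul_distrib]
    refine Finset.prod_congr rfl fun j _ => ?_
    rw [qp_succ, qp_succ, mul_div_mul_comm, mul_assoc,
      div_mul_cancel₀ _ (den_q_ne q u hq0 hq1 hu hgen i j (k i))]
  linear_combination (∏ i' ∈ univ.erase i,
    ∏ j : Fin n, qp q (a j * u i' / u j) (k i') / qp q (q * u i' / u j) (k i')) * hkey


include hq0 hq1 hu hgen in
lemma term_ratio (k : Fin n → ℕ) (i : Fin n) :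
    term q a u (bump i k) *
      ((∏ j ∈ univ.erase i, (u i * q ^ (k i) - u j * q ^ (k j))) *
        ∏ j : Fin n, (1 - (q * u i / u j) * q ^ (k i)))
    = term q a u k *
      ((∏ j ∈ univ.erase i, (q * (u i * q ^ (k i)) - u j * q ^ (k j))) *
        ∏ j : Fin n, (1 - (a j * u i / u j) * q ^ (k i))) := by
  classical
  have hxb : ∀ i', Function.update (fun i' => u i' * q ^ (k i')) i
      (q * (u i * q ^ (k i))) i' = u i' * q ^ (bump i k i') := by
    intro i'
    by_cases h : i' = i
    · subst h
      rw [Function.update_self, bump_apply_self, pow_succ]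
      ring
    · rw [Function.update_of_ne h, bump_apply_ne _ _ _ h]
  have hV := V_ratio u (fun i' => u i' * q ^ (k i')) (q * (u i * q ^ (k i))) i
  simp only [hxb] at hV
  have hP := P_ratio q a u hq0 hq1 hu hgen k i
  rw [term, term, mul_mul_mul_comm, hV, hP, mul_mul_mul_comm]
end hyps2

lemma sum_bump (i : Fin n) (k : Fin n → ℕ) : ∑ j, bump i k j = (∑ j, k j) + 1 := by
  classical
  rw [bump, Finset.sum_update_of_mem (mem_univ i), Finset.sdiff_singleton_eq_erase,
    ← Finset.add_sum_erase univ k (mem_univ i)]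
  omega

section hyps3

variable (hq0 : q ≠ 0) (hq1 : ‖q‖ < 1)
variable (ha : ∀ i, a i ≠ 0) (hu : ∀ i, u i ≠ 0)
variable (hgen : ∀ i j : Fin n, i ≠ j → ∀ r : ℤ, u i ≠ q ^ r * u j)

include hq0 hq1 ha hu hgen in
lemma scalar_key (k : Fin n → ℕ) (i : Fin n) :
    gfun q u (bump i k) i *
      ((∏ j ∈ univ.erase i, (q * (u i * q ^ (k i)) - u j * q ^ (k j))) *
        ∏ j : Fin n, (1 - (a j * u i / u j) * q ^ (k i)))
    = hfun q a u k i *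
      ((∏ j ∈ univ.erase i, (u i * q ^ (k i) - u j * q ^ (k j))) *
        ∏ j : Fin n, (1 - (q * u i / u j) * q ^ (k i))) := by
  classical
  have hki_le : k i ≤ ∑ j, k j :=
    Finset.single_le_sum (f := k) (fun _ _ => Nat.zero_le _) (mem_univ i)
  have hqS : q ^ (∑ j, k j) = q ^ (∑ j, k j - k i) * q ^ (k i) := by
    rw [← pow_add, Nat.sub_add_cancel hki_le]
  have hD1ne : (∏ j ∈ univ.erase i, (u i * q ^ (k i) - u j * q ^ (k j))) ≠ 0 := by
    rw [Finset.prod_ne_zero_iff]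
    intro j hj
    exact xx_sub_ne q u hq0 hu hgen i j (fun h => (mem_erase.mp hj).1 h.symm) (k i) (k j)
  have hxi : u i * q ^ (k i) ≠ 0 := x_ne_zero q u hq0 hu i (k i)
  have hPAne : (∏ j, a j) ≠ 0 := Finset.prod_ne_zero_iff.mpr fun j _ => ha j
  -- common form
  have hg : gfun q u (bump i k) i
      = (1 - q ^ (k i + 1)) * q ^ (∑ j, k j - k i) *
        ∏ j ∈ univ.erase i,
          ((q * (u i * q ^ (k i)) - u j) / (q * (u i * q ^ (k i)) - u j * q ^ (k j))) := by
    rw [gfun, bump_apply_self]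
    have he : (∑ j, bump i k j) - (k i + 1) = ∑ j, k j - k i := by
      rw [sum_bump]
      omega
    rw [he]
    congr 1
    refine Finset.prod_congr rfl fun j hj => ?_
    have hji : j ≠ i := (mem_erase.mp hj).1
    rw [bump_apply_ne _ _ _ hji, pow_succ]
    ring
  have hcancel : (∏ j ∈ univ.erase i,
        ((q * (u i * q ^ (k i)) - u j) / (q * (u i * q ^ (k i)) - u j * q ^ (k j)))) *
      (∏ j ∈ univ.erase i, (q * (u i * q ^ (k i)) - u j * q ^ (k j)))
      = ∏ j ∈ univ.erase i, (q * (u i * q ^ (k i)) - u j) := by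
    rw [← Finset.prod_mul_distrib]
    refine Finset.prod_congr rfl fun j hj => ?_
    have hji : j ≠ i := (mem_erase.mp hj).1
    refine div_mul_cancel₀ _ ?_
    have hrw : q * (u i * q ^ (k i)) - u j * q ^ (k j)
        = u i * q ^ (k i + 1) - u j * q ^ (k j) := by rw [pow_succ]; ring
    rw [hrw]
    exact xx_sub_ne q u hq0 hu hgen i j (fun h => hji h.symm) (k i + 1) (k j)
  have hLHS : gfun q u (bump i k) i *
      ((∏ j ∈ univ.erase i, (q * (u i * q ^ (k i)) - u j * q ^ (k j))) *
        ∏ j : Fin n, (1 - (a j * u i / u j) * q ^ (k i)))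
      = (1 - q ^ (k i + 1)) * q ^ (∑ j, k j - k i) *
        ((∏ j ∈ univ.erase i, (q * (u i * q ^ (k i)) - u j)) *
          ∏ j : Fin n, (1 - (a j * u i / u j) * q ^ (k i))) := by
    rw [hg]
    linear_combination ((1 - q ^ (k i + 1)) * q ^ (∑ j, k j - k i) *
      (∏ j : Fin n, (1 - (a j * u i / u j) * q ^ (k i)))) * hcancel
  have hpairprod : (∏ j, (u i * q ^ (k i) - u j / a j)) *
      (∏ j : Fin n, (1 - (q * u i / u j) * q ^ (k i)))
      = (∏ j : Fin n, a j)⁻¹ * ((∏ j : Fin n, (1 - (a j * u i / u j) * q ^ (k i))) *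
        ∏ j : Fin n, (q * (u i * q ^ (k i)) - u j)) := by
    rw [← Finset.prod_inv_distrib, ← Finset.prod_mul_distrib, ← Finset.prod_mul_distrib,
      ← Finset.prod_mul_distrib]
    refine Finset.prod_congr rfl fun j _ => ?_
    field_simp [ha j, hu j]
    ring
  have hsplit : ∏ j : Fin n, (q * (u i * q ^ (k i)) - u j)
      = (q * (u i * q ^ (k i)) - u i) * ∏ j ∈ univ.erase i, (q * (u i * q ^ (k i)) - u j) :=
    (Finset.mul_prod_erase univ _ (mem_univ i)).symm
  have collapse : ∀ A B c D E : ℂ, c ≠ 0 → D ≠ 0 →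
      A * (B / (c * D)) * (D * E) = A * B * E / c := by
    intros A B c D E hc hD
    field_simp
  have hRHS : hfun q a u k i *
      ((∏ j ∈ univ.erase i, (u i * q ^ (k i) - u j * q ^ (k j))) *
        ∏ j : Fin n, (1 - (q * u i / u j) * q ^ (k i)))
      = (1 - q ^ (k i + 1)) * q ^ (∑ j, k j - k i) *
        ((∏ j ∈ univ.erase i, (q * (u i * q ^ (k i)) - u j)) *
          ∏ j : Fin n, (1 - (a j * u i / u j) * q ^ (k i))) := by
    rw [hfun, collapse _ _ _ _ _ hxi hD1ne]
    calc (-((∏ j, a j) * q ^ (∑ j, k j))) * (∏ j, (u i * q ^ (k i) - u j / a j)) *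
          (∏ j : Fin n, (1 - (q * u i / u j) * q ^ (k i))) / (u i * q ^ (k i))
        = (-((∏ j, a j) * q ^ (∑ j, k j))) * ((∏ j, (u i * q ^ (k i) - u j / a j)) *
          (∏ j : Fin n, (1 - (q * u i / u j) * q ^ (k i)))) / (u i * q ^ (k i)) := by ring
      _ = (-((∏ j, a j) * q ^ (∑ j, k j))) * ((∏ j : Fin n, a j)⁻¹ *
            ((∏ j : Fin n, (1 - (a j * u i / u j) * q ^ (k i))) *
              ∏ j : Fin n, (q * (u i * q ^ (k i)) - u j))) / (u i * q ^ (k i)) := by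
          rw [hpairprod]
      _ = ((∏ j, a j) * (∏ j, a j)⁻¹) * (-(q ^ (∑ j, k j)) *
            ((∏ j : Fin n, (1 - (a j * u i / u j) * q ^ (k i))) *
              ∏ j : Fin n, (q * (u i * q ^ (k i)) - u j)) / (u i * q ^ (k i))) := by
          ring
      _ = -(q ^ (∑ j, k j)) * ((∏ j : Fin n, (1 - (a j * u i / u j) * q ^ (k i))) *
              ∏ j : Fin n, (q * (u i * q ^ (k i)) - u j)) / (u i * q ^ (k i)) := by
          rw [mul_inv_cancel₀ hPAne, one_mul]
      _ = (1 - q ^ (k i + 1)) * q ^ (∑ j, k j - k i) *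
          ((∏ j ∈ univ.erase i, (q * (u i * q ^ (k i)) - u j)) *
            ∏ j : Fin n, (1 - (a j * u i / u j) * q ^ (k i))) := by
          rw [hsplit, hqS]
          rw [div_eq_iff hxi]
          ring
  rw [hLHS, hRHS]

end hyps3

section hyps4

variable (hq0 : q ≠ 0) (hq1 : ‖q‖ < 1)
variable (ha : ∀ i, a i ≠ 0) (hu : ∀ i, u i ≠ 0)
variable (hgen : ∀ i j : Fin n, i ≠ j → ∀ r : ℤ, u i ≠ q ^ r * u j)

lemma gfun_zero (k : Fin n → ℕ) (i : Fin n) (hki : k i = 0) : gfun q u k i = 0 := by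
  rw [gfun, hki]
  simp

include hq0 hu hgen in
lemma sum_gfun (k : Fin n → ℕ) : ∑ i, gfun q u k i = 1 - q ^ (∑ j, k j) := by
  classical
  have hx0 : ∀ i, u i * q ^ (k i) ≠ 0 := fun i => x_ne_zero q u hq0 hu i (k i)
  have hxne : ∀ i j : Fin n, i ≠ j → u i * q ^ (k i) ≠ u j * q ^ (k j) :=
    fun i j hij => x_ne q u hq0 hgen i j hij (k i) (k j)
  have hgeq : ∀ i : Fin n, gfun q u k i
      = (-(q ^ (∑ j, k j))) * ((∏ j, (u i * q ^ (k i) - u j)) /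
          ((u i * q ^ (k i)) * ∏ j ∈ univ.erase i, (u i * q ^ (k i) - u j * q ^ (k j)))) := by
    intro i
    have hki_le : k i ≤ ∑ j, k j :=
      Finset.single_le_sum (f := k) (fun _ _ => Nat.zero_le _) (mem_univ i)
    have hqS : q ^ (∑ j, k j) = q ^ (∑ j, k j - k i) * q ^ (k i) := by
      rw [← pow_add, Nat.sub_add_cancel hki_le]
    have hD1ne : (∏ j ∈ univ.erase i, (u i * q ^ (k i) - u j * q ^ (k j))) ≠ 0 := by
      rw [Finset.prod_ne_zero_iff]
      intro j hj
      rw [sub_ne_zero]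
      exact hxne i j (fun h => (mem_erase.mp hj).1 h.symm)
    have hsplit : ∏ j : Fin n, (u i * q ^ (k i) - u j)
        = (u i * q ^ (k i) - u i) * ∏ j ∈ univ.erase i, (u i * q ^ (k i) - u j) :=
      (Finset.mul_prod_erase univ _ (mem_univ i)).symm
    rw [gfun, Finset.prod_div_distrib, hsplit, hqS]
    field_simp [hu i, pow_ne_zero (k i) hq0, hD1ne]
    ring
  rw [Finset.sum_congr rfl (fun i _ => hgeq i), ← Finset.mul_sum,
    lagrange_key (fun i => u i * q ^ (k i)) u hx0 hxne]
  have hPX : ∏ j : Fin n, (u j * q ^ (k j)) = (∏ j, u j) * q ^ (∑ j, k j) := by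
    rw [Finset.prod_mul_distrib, Finset.prod_pow_eq_pow_sum]
  rw [hPX]
  have hPU : (∏ j : Fin n, u j) ≠ 0 := Finset.prod_ne_zero_iff.mpr fun j _ => hu j
  field_simp [pow_ne_zero _ hq0]
  ring

include hq0 ha hu hgen in
lemma sum_hfun (k : Fin n → ℕ) : ∑ i, hfun q a u k i = 1 - (∏ j, a j) * q ^ (∑ j, k j) := by
  classical
  have hx0 : ∀ i, u i * q ^ (k i) ≠ 0 := fun i => x_ne_zero q u hq0 hu i (k i)
  have hxne : ∀ i j : Fin n, i ≠ j → u i * q ^ (k i) ≠ u j * q ^ (k j) :=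
    fun i j hij => x_ne q u hq0 hgen i j hij (k i) (k j)
  rw [show (fun i => hfun q a u k i) = fun i => (-((∏ j, a j) * q ^ (∑ j, k j))) *
      ((∏ j, (u i * q ^ (k i) - u j / a j)) /
        ((u i * q ^ (k i)) * ∏ j ∈ univ.erase i, (u i * q ^ (k i) - u j * q ^ (k j))))
      from rfl]
  rw [← Finset.mul_sum, lagrange_key (fun i => u i * q ^ (k i)) (fun j => u j / a j) hx0 hxne]
  have hPX : ∏ j : Fin n, (u j * q ^ (k j)) = (∏ j, u j) * q ^ (∑ j, k j) := by
    rw [Finset.prod_mul_distrib, Finset.prod_pow_eq_pow_sum]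
  rw [hPX, Finset.prod_div_distrib]
  have hPU : (∏ j : Fin n, u j) ≠ 0 := Finset.prod_ne_zero_iff.mpr fun j _ => hu j
  have hPA : (∏ j : Fin n, a j) ≠ 0 := Finset.prod_ne_zero_iff.mpr fun j _ => ha j
  field_simp [pow_ne_zero _ hq0]
  ring

include hq0 hq1 ha hu hgen in
lemma key_step (k : Fin n → ℕ) (i : Fin n) :
    gfun q u (bump i k) i * term q a u (bump i k) = hfun q a u k i * term q a u k := by
  classical
  have hD1ne : (∏ j ∈ univ.erase i, (u i * q ^ (k i) - u j * q ^ (k j))) ≠ 0 := by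
    rw [Finset.prod_ne_zero_iff]
    intro j hj
    exact xx_sub_ne q u hq0 hu hgen i j (fun h => (mem_erase.mp hj).1 h.symm) (k i) (k j)
  have hD2ne : (∏ j : Fin n, (1 - (q * u i / u j) * q ^ (k i))) ≠ 0 :=
    Finset.prod_ne_zero_iff.mpr fun j _ => den_q_ne q u hq0 hq1 hu hgen i j (k i)
  have hDne : (∏ j ∈ univ.erase i, (u i * q ^ (k i) - u j * q ^ (k j))) *
      (∏ j : Fin n, (1 - (q * u i / u j) * q ^ (k i))) ≠ 0 := mul_ne_zero hD1ne hD2ne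
  have htr := term_ratio q a u hq0 hq1 hu hgen k i
  have hsc := scalar_key q a u hq0 hq1 ha hu hgen k i
  have h1 : gfun q u (bump i k) i * term q a u (bump i k) *
      ((∏ j ∈ univ.erase i, (u i * q ^ (k i) - u j * q ^ (k j))) *
        ∏ j : Fin n, (1 - (q * u i / u j) * q ^ (k i)))
      = hfun q a u k i * term q a u k *
      ((∏ j ∈ univ.erase i, (u i * q ^ (k i) - u j * q ^ (k j))) *
        ∏ j : Fin n, (1 - (q * u i / u j) * q ^ (k i))) := by
    calc gfun q u (bump i k) i * term q a u (bump i k) *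
        ((∏ j ∈ univ.erase i, (u i * q ^ (k i) - u j * q ^ (k j))) *
          ∏ j : Fin n, (1 - (q * u i / u j) * q ^ (k i)))
        = gfun q u (bump i k) i * (term q a u (bump i k) *
          ((∏ j ∈ univ.erase i, (u i * q ^ (k i) - u j * q ^ (k j))) *
            ∏ j : Fin n, (1 - (q * u i / u j) * q ^ (k i)))) := by ring
      _ = gfun q u (bump i k) i * (term q a u k *
          ((∏ j ∈ univ.erase i, (q * (u i * q ^ (k i)) - u j * q ^ (k j))) *
            ∏ j : Fin n, (1 - (a j * u i / u j) * q ^ (k i)))) := by rw [htr]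
      _ = term q a u k * (gfun q u (bump i k) i *
          ((∏ j ∈ univ.erase i, (q * (u i * q ^ (k i)) - u j * q ^ (k j))) *
            ∏ j : Fin n, (1 - (a j * u i / u j) * q ^ (k i)))) := by ring
      _ = term q a u k * (hfun q a u k i *
          ((∏ j ∈ univ.erase i, (u i * q ^ (k i) - u j * q ^ (k j))) *
            ∏ j : Fin n, (1 - (q * u i / u j) * q ^ (k i)))) := by rw [hsc]
      _ = hfun q a u k i * term q a u k *
          ((∏ j ∈ univ.erase i, (u i * q ^ (k i) - u j * q ^ (k j))) *
            ∏ j : Fin n, (1 - (q * u i / u j) * q ^ (k i))) := by ring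
  exact mul_right_cancel₀ hDne h1

end hyps4

def levelSet (n M : ℕ) : Finset (Fin n → ℕ) :=
  (Fintype.piFinset fun _ : Fin n => Finset.range (M + 1)).filter (fun k => ∑ i, k i = M)

lemma mem_levelSet {M : ℕ} {k : Fin n → ℕ} : k ∈ levelSet n M ↔ ∑ i, k i = M := by
  simp only [levelSet, mem_filter, Fintype.mem_piFinset, Finset.mem_range]
  constructor
  · rintro ⟨_, h⟩; exact h
  · intro h
    refine ⟨fun i => ?_, h⟩
    have : k i ≤ ∑ j, k j := Finset.single_le_sum (fun _ _ => Nat.zero_le _) (mem_univ i)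
    omega

section hyps5

variable (hq0 : q ≠ 0) (hq1 : ‖q‖ < 1)
variable (ha : ∀ i, a i ≠ 0) (hu : ∀ i, u i ≠ 0)
variable (hgen : ∀ i j : Fin n, i ≠ j → ∀ r : ℤ, u i ≠ q ^ r * u j)

include hq0 hq1 ha hu hgen in
lemma step (M : ℕ) :
    (1 - q ^ (M + 1)) * ∑ k ∈ levelSet n (M + 1), term q a u k
    = (1 - (∏ j, a j) * q ^ M) * ∑ k ∈ levelSet n M, term q a u k := by
  classical
  rw [Finset.mul_sum, Finset.mul_sum]
  calc ∑ k ∈ levelSet n (M + 1), (1 - q ^ (M + 1)) * term q a u k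
      = ∑ k ∈ levelSet n (M + 1), ∑ i, gfun q u k i * term q a u k := by
        refine Finset.sum_congr rfl fun k hk => ?_
        rw [← Finset.sum_mul, sum_gfun q u hq0 hu hgen, mem_levelSet.mp hk]
    _ = ∑ i, ∑ k ∈ levelSet n (M + 1), gfun q u k i * term q a u k := Finset.sum_comm
    _ = ∑ i : Fin n, ∑ k ∈ (levelSet n (M + 1)).filter (fun k => k i ≠ 0),
          gfun q u k i * term q a u k := by
        refine Finset.sum_congr rfl fun i _ => ?_
        refine (Finset.sum_filter_of_ne ?_).symm
        intro k _ hne hki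
        exact hne (by rw [gfun_zero q u k i (by omega), zero_mul])
    _ = ∑ i : Fin n, ∑ k' ∈ levelSet n M, gfun q u (bump i k') i * term q a u (bump i k') := by
        refine Finset.sum_congr rfl fun i _ => ?_
        refine Finset.sum_nbij' (fun k => Function.update k i (k i - 1)) (bump i)
          ?_ ?_ ?_ ?_ ?_
        · intro k hk
          rw [mem_levelSet]
          obtain ⟨hk1, hk2⟩ := Finset.mem_filter.mp hk
          have hsum := mem_levelSet.mp hk1
          rw [Finset.sum_update_of_mem (mem_univ i), Finset.sdiff_singleton_eq_erase,
            ← Finset.add_sum_erase univ k (mem_univ i)] at *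
          omega
        · intro k' hk'
          rw [Finset.mem_filter, mem_levelSet, sum_bump, mem_levelSet.mp hk']
          exact ⟨rfl, by rw [bump_apply_self]; omega⟩
        · intro k hk
          obtain ⟨_, hki⟩ := Finset.mem_filter.mp hk
          funext j
          by_cases hj : j = i
          · subst hj
            simp only [bump, Function.update_self]
            omega
          · simp only [bump, Function.update_of_ne hj]
        · intro k' _
          funext j
          by_cases hj : j = i
          · subst hj
            simp only [bump, Function.update_self]
            omega
          · simp only [bump, Function.update_of_ne hj]
        · intro k hk
          obtain ⟨_, hki⟩ := Finset.mem_filter.mp hk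
          have hback : bump i (Function.update k i (k i - 1)) = k := by
            funext j
            by_cases hj : j = i
            · subst hj
              simp only [bump, Function.update_self]
              omega
            · simp only [bump, Function.update_of_ne hj]
          rw [hback]
    _ = ∑ i : Fin n, ∑ k' ∈ levelSet n M, hfun q a u k' i * term q a u k' := by
        refine Finset.sum_congr rfl fun i _ => Finset.sum_congr rfl fun k' _ => ?_
        exact key_step q a u hq0 hq1 ha hu hgen k' i
    _ = ∑ k' ∈ levelSet n M, ∑ i, hfun q a u k' i * term q a u k' := Finset.sum_comm
    _ = ∑ k' ∈ levelSet n M, (1 - (∏ j, a j) * q ^ M) * term q a u k' := by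
        refine Finset.sum_congr rfl fun k' hk' => ?_
        rw [← Finset.sum_mul, sum_hfun q a u hq0 ha hu hgen, mem_levelSet.mp hk']

include hq0 hq1 ha hu hgen in
lemma main_result (M : ℕ) :
    ∑ k ∈ levelSet n M, term q a u k = qp q (∏ i, a i) M / qp q q M := by
  classical
  induction M with
  | zero =>
    have hset : levelSet n 0 = {fun _ => 0} := by
      ext k
      rw [mem_levelSet, Finset.mem_singleton]
      constructor
      · intro h
        funext i
        have := Finset.sum_eq_zero_iff.mp h i (mem_univ i)
        exact this
      · intro h; rw [h]; simp
    rw [hset, Finset.sum_singleton]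
    have hterm1 : term q a u (fun _ => 0) = 1 := by
      rw [term]
      have h1 : (∏ i : Fin n, ∏ j ∈ Ioi i, (u i * q ^ (0:ℕ) - u j * q ^ (0:ℕ)) / (u i - u j))
          = 1 := by
        refine Finset.prod_eq_one fun i _ => Finset.prod_eq_one fun j hj => ?_
        rw [pow_zero, mul_one, mul_one]
        exact div_self (u_sub_ne q u hq0 hgen i j (ne_of_lt (mem_Ioi.mp hj)))
      have h2 : (∏ i : Fin n, ∏ j : Fin n,
          qp q (a j * u i / u j) 0 / qp q (q * u i / u j) 0) = 1 := by
        refine Finset.prod_eq_one fun i _ => Finset.prod_eq_one fun j _ => ?_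
        simp [qp]
      rw [h1, h2, one_mul]
    rw [hterm1]
    simp [qp]
  | succ M ih =>
    have hne : (1 : ℂ) - q ^ (M + 1) ≠ 0 := by
      intro h
      exact pow_ne_one q hq1 M (by linear_combination -h)
    have hstep := step q a u hq0 hq1 ha hu hgen M
    rw [ih] at hstep
    have hqq : qp q q M ≠ 0 := qp_qq_ne q hq1 M
    have h2 : (1 - q ^ (M + 1)) * (∑ k ∈ levelSet n (M + 1), term q a u k) * qp q q M
        = (1 - (∏ j, a j) * q ^ M) * qp q (∏ i, a i) M := by
      rw [hstep, mul_assoc, div_mul_cancel₀ _ hqq]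
    have hS : ∑ k ∈ levelSet n (M + 1), term q a u k
        = (1 - (∏ j, a j) * q ^ M) * qp q (∏ i, a i) M / (qp q q M * (1 - q ^ (M + 1))) := by
      rw [eq_div_iff (mul_ne_zero hqq hne)]
      linear_combination h2
    rw [hS, qp_succ, qp_succ]
    have hq1m : (1 : ℂ) - q * q ^ M = 1 - q ^ (M + 1) := by rw [pow_succ]; ring
    rw [hq1m]
    field_simp

end hyps5
end Milne

/-- Milne's fundamental theorem of `A_{n-1}` series. -/
theorem milne_fundamental_theorem
    (n : ℕ) (hn : 1 ≤ n) (M : ℕ) (q : ℂ)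
    (hq0 : 0 < ‖q‖) (hq1 : ‖q‖ < 1)
    (a u : Fin n → ℂ) (ha : ∀ i, a i ≠ 0) (hu : ∀ i, u i ≠ 0)
    (hgen : ∀ i j : Fin n, i ≠ j → ∀ r : ℤ, u i ≠ q ^ r * u j) :
    ∑ k ∈ (Fintype.piFinset fun _ : Fin n => Finset.range (M + 1)).filter
        (fun k => ∑ i, k i = M),
      ((∏ i : Fin n, ∏ j ∈ Finset.Ioi i,
          (u i * q ^ (k i) - u j * q ^ (k j)) / (u i - u j)) *
        ∏ i : Fin n, ∏ j : Fin n,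
          qPoch q (a j * u i / u j) (k i) / qPoch q (q * u i / u j) (k i))
      = qPoch q (∏ i, a i) M / qPoch q q M := by
  have hq0' : q ≠ 0 := by
    intro h
    rw [h] at hq0
    simp at hq0
  have := Milne.main_result q a u hq0' hq1 ha hu hgen M
  simp only [Milne.term, Milne.levelSet] at this
  simp only [qPoch_natCast]
  exact this
end

section
/- (Multidimensional matrix inverse.) Let n ≥ 1, let b ∈ ℂ, and let a_i : ℤ → ℂ and c_i : ℤ → ℂ (1 ≤ i ≤ n) be sequences of nonzero complex numbers, all generic so that no denominator below vanishes. For m ≥ k ≥ l in ℤ^n (componentwise) define f_{m,k} = [∏_{i=1}^n c_i(k_i)^{−1}] · [∏_{1≤i<j≤n} (c_i(k_i) − c_j(k_j))^{−1}] · det_{1≤i,j≤n}[ c_i(m_i)^{n+1−j} − a_i(m_i)^{n+1−j} · (c_i(m_i) − b/∏_{s=1}^n c_s(k_s))/(a_i(m_i) − b/∏_{s=1}^n c_s(k_s)) · ∏_{s=1}^n (c_i(m_i) − c_s(k_s))/(a_i(m_i) − c_s(k_s)) ] · ∏_{i=1}^n ∏_{y=k_i+1}^{m_i} [ (a_i(y)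 − b/∏_{j=1}^n c_j(k_j))/(c_i(y) − b/∏_{j=1}^n c_j(k_j)) · ∏_{j=1}^n (a_i(y) − c_j(k_j))/(c_i(y) − c_j(k_j)) ], and g_{k,l} = ∏_{i=1}^n [ ∏_{y=l_i+1}^{k_i} ( (a_i(y) − b/∏_{j=1}^n c_j(k_j)) · ∏_{j=1}^n (a_i(y) − c_j(k_j)) ) ] / [ ∏_{y=l_i}^{k_i−1} ( (c_i(y) − b/∏_{j=1}^n c_j(k_j)) · ∏_{j=1}^n (c_i(y) − c_j(k_j)) ) ]. Then for all m, l ∈ ℤ^n with m ≥ l one has ∑_{k∈ℤ^n, l ≤ k ≤ m} f_{m,k} · g_{k,l} = 1 if m = l and 0 otherwise. -/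
open scoped BigOperators
open Finset Polynomial

namespace LSAux


lemma sum_telescope_aux (v : ℤ → ℂ) (L : ℤ) :
    ∀ N : ℕ, ∑ t ∈ Icc L (L + N), (v t - v (t + 1)) = v L - v (L + N + 1) := by
  intro N
  induction N with
  | zero => simp
  | succ N ih =>
      have hins : Icc L (L + (N + 1 : ℕ)) = insert (L + N + 1) (Icc L (L + N)) := by
        ext t; simp only [mem_Icc, mem_insert]; push_cast; omega
      rw [hins, sum_insert (by simp only [mem_Icc]; omega), ih]
      have : (L + (N + 1 : ℕ) + 1) = (L + N + 1 + 1) := by push_cast; ring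
      rw [this]; ring

lemma sum_telescope_Icc (L M : ℤ) (h : L ≤ M) (v : ℤ → ℂ) :
    ∑ t ∈ Icc L M, (v t - v (t + 1)) = v L - v (M + 1) := by
  have h1 : M = L + ((M - L).toNat : ℤ) := by omega
  rw [h1]; exact sum_telescope_aux v L (M - L).toNat

lemma Icc_insert_left' (L M : ℤ) (h : L ≤ M) :
    Icc L M = insert L (Icc (L + 1) M) := by
  ext t; simp only [mem_Icc, mem_insert]; omega

lemma Icc_insert_right' (L M : ℤ) (h : L ≤ M) :
    Icc L M = insert M (Icc L (M - 1)) := by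
  ext t; simp only [mem_Icc, mem_insert]; omega

lemma tele (L M : ℤ) (h : L < M) (A C : ℤ → ℂ) (NN FF : ℂ → ℂ)
    (hNCL : NN (C L) = 0) (hFCM : FF (C M) = 0)
    (hNA : ∀ y ∈ Icc L M, NN (A y) ≠ 0)
    (hNC : ∀ y ∈ Icc (L + 1) M, NN (C y) ≠ 0)
    (hFC : ∀ y ∈ Icc L (M - 1), FF (C y) ≠ 0) :
    ∑ t ∈ Icc L M,
      ((∏ y ∈ Icc (t + 1) M, FF (A y)) / (∏ y ∈ Icc t (M - 1), FF (C y)) *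
          ∏ y ∈ Icc (L + 1) t, NN (A y) / NN (C y)) *
        (FF (A t) * NN (C t) / NN (A t) - FF (C t)) = 0 := by
  set v : ℤ → ℂ := fun t => if L < t ∧ t ≤ M then
      (∏ y ∈ Icc t M, FF (A y)) * (∏ y ∈ Icc (L + 1) (t - 1), NN (A y)) /
      ((∏ y ∈ Icc t (M - 1), FF (C y)) * (∏ y ∈ Icc (L + 1) (t - 1), NN (C y)))
    else 0 with hvdef
  have hvL : v L = 0 := if_neg (by omega)
  have hvM1 : v (M + 1) = 0 := if_neg (by omega)
  have hFCprod : ∀ t1 t2 : ℤ, L ≤ t1 → t2 ≤ M - 1 →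
      (∏ y ∈ Icc t1 t2, FF (C y)) ≠ 0 := by
    intro t1 t2 h1 h2
    refine Finset.prod_ne_zero_iff.mpr fun y hy => hFC y ?_
    simp only [mem_Icc] at hy ⊢; omega
  have hNCprod : ∀ t1 t2 : ℤ, L + 1 ≤ t1 → t2 ≤ M →
      (∏ y ∈ Icc t1 t2, NN (C y)) ≠ 0 := by
    intro t1 t2 h1 h2
    refine Finset.prod_ne_zero_iff.mpr fun y hy => hNC y ?_
    simp only [mem_Icc] at hy ⊢; omega
  have key : ∀ t ∈ Icc L M,
      ((∏ y ∈ Icc (t + 1) M, FF (A y)) / (∏ y ∈ Icc t (M - 1), FF (C y)) *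
          ∏ y ∈ Icc (L + 1) t, NN (A y) / NN (C y)) *
        (FF (A t) * NN (C t) / NN (A t) - FF (C t)) = v t - v (t + 1) := by
    intro t ht
    simp only [mem_Icc] at ht
    by_cases htL : t = L
    · have hNCt0 : NN (C t) = 0 := by rw [htL]; exact hNCL
      have hvt0 : v t = 0 := by rw [htL]; exact hvL
      rw [show Icc (L + 1) t = (∅ : Finset ℤ) from Icc_eq_empty (by omega), prod_empty,
        mul_one, hNCt0, mul_zero, zero_div, zero_sub, hvt0, zero_sub, mul_neg, neg_inj]
      have hv1 : v (t + 1) = (∏ y ∈ Icc (t + 1) M, FF (A y)) /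
          (∏ y ∈ Icc (t + 1) (M - 1), FF (C y)) := by
        rw [hvdef]
        simp only
        rw [if_pos (by omega)]
        rw [show t + 1 - 1 = t from by ring]
        simp only [show Icc (L + 1) t = (∅ : Finset ℤ) from Icc_eq_empty (by omega),
          prod_empty, mul_one]
      rw [hv1]
      have hsplit : (∏ y ∈ Icc t (M - 1), FF (C y))
          = FF (C t) * ∏ y ∈ Icc (t + 1) (M - 1), FF (C y) := by
        rw [Icc_insert_left' t (M - 1) (by omega),
          prod_insert (by simp only [mem_Icc]; omega)]
      rw [hsplit]
      have h1 : FF (C t) ≠ 0 := hFC t (by simp only [mem_Icc]; omega)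
      have h2 : (∏ y ∈ Icc (t + 1) (M - 1), FF (C y)) ≠ 0 := hFCprod _ _ (by omega) le_rfl
      field_simp
    · have htL' : L + 1 ≤ t := by omega
      have hNAt : NN (A t) ≠ 0 := hNA t (by simp only [mem_Icc]; omega)
      have hNCt : NN (C t) ≠ 0 := hNC t (by simp only [mem_Icc]; omega)
      -- split the NN products at t
      have hsA : (∏ y ∈ Icc (L + 1) t, NN (A y))
          = NN (A t) * ∏ y ∈ Icc (L + 1) (t - 1), NN (A y) := by
        rw [Icc_insert_right' (L + 1) t htL',
          prod_insert (by simp only [mem_Icc]; omega)]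
      have hsC : (∏ y ∈ Icc (L + 1) t, NN (C y))
          = NN (C t) * ∏ y ∈ Icc (L + 1) (t - 1), NN (C y) := by
        rw [Icc_insert_right' (L + 1) t htL',
          prod_insert (by simp only [mem_Icc]; omega)]
      have hQa : (∏ y ∈ Icc (L + 1) t, NN (A y) / NN (C y))
          = (∏ y ∈ Icc (L + 1) t, NN (A y)) / (∏ y ∈ Icc (L + 1) t, NN (C y)) :=
        Finset.prod_div_distrib _ _
      have hvt : v t = (∏ y ∈ Icc t M, FF (A y)) * (∏ y ∈ Icc (L + 1) (t - 1), NN (A y)) /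
          ((∏ y ∈ Icc t (M - 1), FF (C y)) * (∏ y ∈ Icc (L + 1) (t - 1), NN (C y))) := by
        rw [hvdef]; simp only; rw [if_pos (by omega)]
      have hsFa : (∏ y ∈ Icc t M, FF (A y))
          = FF (A t) * ∏ y ∈ Icc (t + 1) M, FF (A y) := by
        rw [Icc_insert_left' t M (by omega), prod_insert (by simp only [mem_Icc]; omega)]
      have hQc : (∏ y ∈ Icc (L + 1) (t - 1), NN (C y)) ≠ 0 := hNCprod _ _ le_rfl (by omega)
      by_cases htM : t = M
      · have hFCt0 : FF (C t) = 0 := by rw [htM]; exact hFCM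
        have hv10 : v (t + 1) = 0 := by rw [htM]; exact hvM1
        rw [hv10, sub_zero, hFCt0, sub_zero]
        rw [show Icc (t + 1) M = (∅ : Finset ℤ) from Icc_eq_empty (by omega), prod_empty,
          show Icc t (M - 1) = (∅ : Finset ℤ) from Icc_eq_empty (by omega), prod_empty,
          hvt, hsFa,
          show Icc t (M - 1) = (∅ : Finset ℤ) from Icc_eq_empty (by omega), prod_empty,
          show Icc (t + 1) M = (∅ : Finset ℤ) from Icc_eq_empty (by omega), prod_empty,
          hQa, hsA, hsC]
        field_simp
      · -- interior case
        have htM' : t ≤ M - 1 := by omega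
        have hvt1 : v (t + 1) = (∏ y ∈ Icc (t + 1) M, FF (A y)) *
              (∏ y ∈ Icc (L + 1) t, NN (A y)) /
            ((∏ y ∈ Icc (t + 1) (M - 1), FF (C y)) * (∏ y ∈ Icc (L + 1) t, NN (C y))) := by
          rw [hvdef]; simp only; rw [if_pos (by omega)]
          rw [show t + 1 - 1 = t from by ring]
        have hsFc : (∏ y ∈ Icc t (M - 1), FF (C y))
            = FF (C t) * ∏ y ∈ Icc (t + 1) (M - 1), FF (C y) := by
          rw [Icc_insert_left' t (M - 1) htM',
            prod_insert (by simp only [mem_Icc]; omega)]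
        have hFCt : FF (C t) ≠ 0 := hFC t (by simp only [mem_Icc]; omega)
        have hPc : (∏ y ∈ Icc (t + 1) (M - 1), FF (C y)) ≠ 0 := hFCprod _ _ (by omega) le_rfl
        rw [hvt, hvt1, hQa, hsA, hsC, hsFa, hsFc]
        field_simp
  rw [Finset.sum_congr rfl key, sum_telescope_Icc L M h.le v, hvL, hvM1, sub_zero]


lemma prod_pairs_mul {n : ℕ} (f : Fin n → ℂ) :
    (∏ i : Fin n, ∏ j ∈ Ioi i, (f i * f j)) = ∏ i : Fin n, f i ^ (n - 1) := by
  have h1 : (∏ i : Fin n, ∏ j ∈ Ioi i, (f i * f j))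
      = (∏ i : Fin n, ∏ j ∈ Ioi i, f i) * (∏ i : Fin n, ∏ j ∈ Ioi i, f j) := by
    rw [← Finset.prod_mul_distrib]
    exact Finset.prod_congr rfl fun i _ => Finset.prod_mul_distrib
  rw [h1]
  have h2 : (∏ i : Fin n, ∏ j ∈ Ioi i, f j) = ∏ j : Fin n, ∏ i ∈ Iio j, f j :=
    Finset.prod_comm' (by simp)
  rw [h2]
  have h3 : (∏ i : Fin n, ∏ j ∈ Ioi i, f i) = ∏ i : Fin n, f i ^ (n - 1 - (i : ℕ)) := by
    exact Finset.prod_congr rfl fun i _ => by rw [Finset.prod_const, Fin.card_Ioi]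
  have h4 : (∏ j : Fin n, ∏ i ∈ Iio j, f j) = ∏ j : Fin n, f j ^ (j : ℕ) := by
    exact Finset.prod_congr rfl fun j _ => by rw [Finset.prod_const, Fin.card_Iio]
  rw [h3, h4, ← Finset.prod_mul_distrib]
  refine Finset.prod_congr rfl fun i _ => ?_
  rw [← pow_add]
  congr 1
  have := i.isLt
  omega

lemma det_pow_rev {n : ℕ} (v : Fin n → ℂ) (hv : ∀ i, v i ≠ 0) :
    Matrix.det (Matrix.of fun i j : Fin n => v i ^ (n - (j : ℕ)))
      = (∏ i, v i) * ∏ i : Fin n, ∏ j ∈ Ioi i, (v i - v j) := by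
  have key : (Matrix.of fun i j : Fin n => v i ^ (n - (j : ℕ)))
      = Matrix.of (fun i j : Fin n => (v i * v i ^ (n - 1)) *
          Matrix.vandermonde (fun i => (v i)⁻¹) i j) := by
    ext i j
    simp only [Matrix.of_apply, Matrix.vandermonde]
    have hn : 0 < n := j.pos
    have hj : (j : ℕ) < n := j.isLt
    have hvi := hv i
    have h5 : v i * v i ^ (n - 1) = v i ^ n := by
      rw [← pow_succ']
      congr 1
      omega
    rw [h5, inv_pow]
    rw [eq_comm, mul_inv_eq_iff_eq_mul₀ (pow_ne_zero _ hvi), ← pow_add]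
    congr 1
    omega
  rw [key, Matrix.det_mul_column, Matrix.det_vandermonde]
  have hpair : ∀ i j : Fin n, (v j)⁻¹ - (v i)⁻¹ = (v i - v j) * ((v i)⁻¹ * (v j)⁻¹) := by
    intro i j
    rw [inv_eq_one_div, inv_eq_one_div, div_sub_div _ _ (hv j) (hv i),
      div_mul_div_comm, mul_one, one_mul, mul_one, mul_div_assoc', mul_one,
      mul_comm (v j) (v i)]
  have h6 : (∏ i : Fin n, ∏ j ∈ Ioi i, ((v j)⁻¹ - (v i)⁻¹))
      = (∏ i : Fin n, ∏ j ∈ Ioi i, (v i - v j)) *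
        ∏ i : Fin n, ((v i)⁻¹) ^ (n - 1) := by
    rw [← prod_pairs_mul (fun i => (v i)⁻¹), ← Finset.prod_mul_distrib]
    refine Finset.prod_congr rfl fun i _ => ?_
    rw [← Finset.prod_mul_distrib]
    exact Finset.prod_congr rfl fun j _ => hpair i j
  rw [h6]
  rw [show (∏ i : Fin n, (v i * v i ^ (n - 1))) *
      ((∏ i : Fin n, ∏ j ∈ Ioi i, (v i - v j)) * ∏ i : Fin n, ((v i)⁻¹) ^ (n - 1))
      = ((∏ i : Fin n, (v i * v i ^ (n - 1))) * ∏ i : Fin n, ((v i)⁻¹) ^ (n - 1)) *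
        (∏ i : Fin n, ∏ j ∈ Ioi i, (v i - v j)) from by ring]
  congr 1
  rw [← Finset.prod_mul_distrib]
  refine Finset.prod_congr rfl fun i _ => ?_
  rw [mul_assoc, ← mul_pow, mul_inv_cancel₀ (hv i), one_pow, mul_one]


lemma det_of_fun {n : ℕ} (g : Fin n → Fin n → ℂ) :
    Matrix.det (Matrix.of g) = ∑ σ : Equiv.Perm (Fin n),
      ((Equiv.Perm.sign σ : ℤ) : ℂ) * ∏ i, g i (σ i) := by
  rw [← Matrix.det_transpose, Matrix.det_apply']
  refine Finset.sum_congr rfl fun σ _ => ?_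
  congr 1

lemma det_sum_exchange {n : ℕ} (s : Fin n → Finset ℤ) (w : Fin n → ℤ → ℂ)
    (R : Fin n → ℤ → Fin n → ℂ) :
    ∑ k ∈ Fintype.piFinset s, (∏ i, w i (k i)) *
        Matrix.det (Matrix.of fun i j : Fin n => R i (k i) j)
      = Matrix.det (Matrix.of fun i j : Fin n => ∑ t ∈ s i, w i t * R i t j) := by
  rw [det_of_fun (fun i j : Fin n => ∑ t ∈ s i, w i t * R i t j)]
  symm
  have step1 : ∀ σ : Equiv.Perm (Fin n),
      (∏ i, ∑ t ∈ s i, w i t * R i t (σ i))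
        = ∑ k ∈ Fintype.piFinset s, ∏ i, (w i (k i) * R i (k i) (σ i)) :=
    fun σ => Finset.prod_univ_sum s fun i t => w i t * R i t (σ i)
  calc ∑ σ : Equiv.Perm (Fin n), ((Equiv.Perm.sign σ : ℤ) : ℂ) *
          ∏ i, ∑ t ∈ s i, w i t * R i t (σ i)
      = ∑ σ : Equiv.Perm (Fin n), ∑ k ∈ Fintype.piFinset s,
          ((Equiv.Perm.sign σ : ℤ) : ℂ) * ((∏ i, w i (k i)) * ∏ i, R i (k i) (σ i)) := by
        refine Finset.sum_congr rfl fun σ _ => ?_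
        rw [step1, Finset.mul_sum]
        refine Finset.sum_congr rfl fun k _ => ?_
        rw [Finset.prod_mul_distrib]
    _ = ∑ k ∈ Fintype.piFinset s, (∏ i, w i (k i)) *
          ∑ σ : Equiv.Perm (Fin n), ((Equiv.Perm.sign σ : ℤ) : ℂ) * ∏ i, R i (k i) (σ i) := by
        rw [Finset.sum_comm]
        refine Finset.sum_congr rfl fun k _ => ?_
        rw [Finset.mul_sum]
        refine Finset.sum_congr rfl fun σ _ => ?_
        ring
    _ = ∑ k ∈ Fintype.piFinset s, (∏ i, w i (k i)) *
        Matrix.det (Matrix.of fun i j : Fin n => R i (k i) j) := by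
        refine Finset.sum_congr rfl fun k _ => ?_
        rw [det_of_fun]


lemma poly_coeffs {n : ℕ} (Bl Bm : ℂ) (d e : Fin n → ℂ)
    (hb : Bl * ∏ s, d s = Bm * ∏ s, e s) :
    ∃ κ : Fin n → ℂ, ∀ z : ℂ,
      (∑ j : Fin n, κ j * z ^ (n - (j : ℕ)))
        = (z - Bl) * ∏ s, (z - d s) - (z - Bm) * ∏ s, (z - e s) := by
  set Np : ℂ[X] := (X - C Bl) * ∏ s : Fin n, (X - C (d s)) with hNp
  set Fp : ℂ[X] := (X - C Bm) * ∏ s : Fin n, (X - C (e s)) with hFp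
  have hNm : Np.Monic := (monic_X_sub_C Bl).mul
    (monic_prod_of_monic _ _ fun s _ => monic_X_sub_C (d s))
  have hFm : Fp.Monic := (monic_X_sub_C Bm).mul
    (monic_prod_of_monic _ _ fun s _ => monic_X_sub_C (e s))
  have hNdeg : Np.natDegree = n + 1 := by
    rw [hNp, natDegree_mul (monic_X_sub_C Bl).ne_zero
      (monic_prod_of_monic _ _ fun s _ => monic_X_sub_C (d s)).ne_zero,
      natDegree_X_sub_C, natDegree_prod_of_monic _ _ fun s _ => monic_X_sub_C (d s)]
    simp [natDegree_X_sub_C]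
    omega
  have hFdeg : Fp.natDegree = n + 1 := by
    rw [hFp, natDegree_mul (monic_X_sub_C Bm).ne_zero
      (monic_prod_of_monic _ _ fun s _ => monic_X_sub_C (e s)).ne_zero,
      natDegree_X_sub_C, natDegree_prod_of_monic _ _ fun s _ => monic_X_sub_C (e s)]
    simp [natDegree_X_sub_C]
    omega
  set Q : ℂ[X] := Np - Fp with hQ
  have hQdeg : Q.natDegree ≤ n := by
    refine natDegree_le_iff_coeff_eq_zero.mpr fun N hN => ?_
    rw [hQ, coeff_sub]
    rcases eq_or_lt_of_le (Nat.succ_le_of_lt hN) with hEq | hLt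
    · subst hEq
      have h1 : Np.coeff (n + 1) = 1 := by rw [← hNdeg]; exact hNm.coeff_natDegree
      have h2 : Fp.coeff (n + 1) = 1 := by rw [← hFdeg]; exact hFm.coeff_natDegree
      rw [show n.succ = n + 1 from rfl, h1, h2, sub_self]
    · rw [coeff_eq_zero_of_natDegree_lt (by omega), coeff_eq_zero_of_natDegree_lt (by omega),
        sub_self]
  have hQ0 : Q.coeff 0 = 0 := by
    rw [hQ, coeff_sub, coeff_zero_eq_eval_zero, coeff_zero_eq_eval_zero, hNp, hFp]
    rw [eval_mul, eval_mul, eval_prod, eval_prod]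
    simp only [eval_sub, eval_X, eval_C, zero_sub]
    have hd : ∏ s : Fin n, (-d s) = (-1) ^ n * ∏ s, d s := by
      rw [show ((-1 : ℂ)) ^ n = ∏ _s : Fin n, (-1 : ℂ) from by
        rw [Finset.prod_const, card_univ, Fintype.card_fin], ← Finset.prod_mul_distrib]
      exact Finset.prod_congr rfl fun s _ => by ring
    have he : ∏ s : Fin n, (-e s) = (-1) ^ n * ∏ s, e s := by
      rw [show ((-1 : ℂ)) ^ n = ∏ _s : Fin n, (-1 : ℂ) from by
        rw [Finset.prod_const, card_univ, Fintype.card_fin], ← Finset.prod_mul_distrib]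
      exact Finset.prod_congr rfl fun s _ => by ring
    rw [hd, he]
    linear_combination ((-1 : ℂ)) ^ (n + 1) * hb
  refine ⟨fun j => Q.coeff (n - (j : ℕ)), fun z => ?_⟩
  show (∑ j : Fin n, Q.coeff (n - (j : ℕ)) * z ^ (n - (j : ℕ)))
      = (z - Bl) * ∏ s, (z - d s) - (z - Bm) * ∏ s, (z - e s)
  have heval : Q.eval z = ∑ i ∈ range (n + 2), Q.coeff i * z ^ i :=
    eval_eq_sum_range' (by omega) z
  have hsub : Ico 1 (n + 1) ⊆ range (n + 2) := by
    intro i hi; simp only [mem_Ico, mem_range] at hi ⊢; omega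
  have hvanish : ∀ i ∈ range (n + 2), i ∉ Ico 1 (n + 1) → Q.coeff i * z ^ i = 0 := by
    intro i hi hni
    simp only [mem_range] at hi
    simp only [mem_Ico] at hni
    rcases Nat.eq_zero_or_pos i with h0 | h0
    · rw [h0, hQ0, zero_mul]
    · have : n + 1 ≤ i := by omega
      rw [coeff_eq_zero_of_natDegree_lt (by omega), zero_mul]
  have heval2 : Q.eval z = ∑ i ∈ Ico 1 (n + 1), Q.coeff i * z ^ i := by
    rw [heval, ← Finset.sum_subset hsub hvanish]
  have himg : (range n).image (fun j => n - j) = Ico 1 (n + 1) := by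
    ext i
    simp only [mem_image, mem_range, mem_Ico]
    constructor
    · rintro ⟨j, hj, rfl⟩; omega
    · intro hi; exact ⟨n - i, by omega, by omega⟩
  have hlhs : (∑ j : Fin n, Q.coeff (n - (j : ℕ)) * z ^ (n - (j : ℕ)))
      = ∑ i ∈ Ico 1 (n + 1), Q.coeff i * z ^ i := by
    rw [← himg, Finset.sum_image (fun x hx y hy hxy => by
      simp only [mem_coe, coe_range, Set.mem_Iio, mem_range] at hx hy
      omega)]
    exact Fin.sum_univ_eq_sum_range (fun j => Q.coeff (n - j) * z ^ (n - j)) n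
  rw [hlhs, ← heval2, hQ, eval_sub, hNp, hFp, eval_mul, eval_mul, eval_prod, eval_prod]
  simp only [eval_sub, eval_X, eval_C]

noncomputable def NB (n : ℕ) (b : ℂ) (c : Fin n → ℤ → ℂ) (k : Fin n → ℤ) (z : ℂ) : ℂ :=
  (z - b / ∏ s, c s (k s)) * ∏ j, (z - c j (k j))

noncomputable def ff (n : ℕ) (b : ℂ) (a c : Fin n → ℤ → ℂ) (m k : Fin n → ℤ) : ℂ :=
  (∏ i : Fin n, (c i (k i))⁻¹) *
    (∏ i : Fin n, ∏ j ∈ Finset.Ioi i, (c i (k i) - c j (k j))⁻¹) *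
    Matrix.det (Matrix.of fun i j : Fin n =>
      c i (m i) ^ (n - (j : ℕ)) -
        a i (m i) ^ (n - (j : ℕ)) *
          ((c i (m i) - b / ∏ s, c s (k s)) /
            (a i (m i) - b / ∏ s, c s (k s))) *
          ∏ s : Fin n, (c i (m i) - c s (k s)) / (a i (m i) - c s (k s))) *
    ∏ i : Fin n, ∏ y ∈ Finset.Icc (k i + 1) (m i),
      ((a i y - b / ∏ j, c j (k j)) / (c i y - b / ∏ j, c j (k j)) *
        ∏ j : Fin n, (a i y - c j (k j)) / (c i y - c j (k j)))

noncomputable def gg (n : ℕ) (b : ℂ) (a c : Fin n → ℤ → ℂ) (k l : Fin n → ℤ) : ℂ :=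
  ∏ i : Fin n,
    (∏ y ∈ Finset.Icc (l i + 1) (k i),
      ((a i y - b / ∏ j, c j (k j)) * ∏ j : Fin n, (a i y - c j (k j)))) /
    (∏ y ∈ Finset.Icc (l i) (k i - 1),
      ((c i y - b / ∏ j, c j (k j)) * ∏ j : Fin n, (c i y - c j (k j))))

section facts
variable {n : ℕ} {b : ℂ} {a c : Fin n → ℤ → ℂ}

lemma NB_a_ne (hab : ∀ (i : Fin n) (y : ℤ) (k : Fin n → ℤ), a i y ≠ b / ∏ s, c s (k s))
    (hac : ∀ (i j : Fin n) (y z : ℤ), a i y ≠ c j z) (k : Fin n → ℤ) (i : Fin n) (y : ℤ) :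
    NB n b c k (a i y) ≠ 0 :=
  mul_ne_zero (sub_ne_zero.mpr (hab i y k))
    (Finset.prod_ne_zero_iff.mpr fun j _ => sub_ne_zero.mpr (hac i j y (k j)))

lemma NB_c_ne (hcb : ∀ (i : Fin n) (y : ℤ) (k : Fin n → ℤ), c i y ≠ b / ∏ s, c s (k s))
    (hcc : ∀ (i j : Fin n) (y z : ℤ), (i, y) ≠ (j, z) → c i y ≠ c j z)
    (k : Fin n → ℤ) (i : Fin n) (y : ℤ) (hy : y ≠ k i) :
    NB n b c k (c i y) ≠ 0 := by
  refine mul_ne_zero (sub_ne_zero.mpr (hcb i y k))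
    (Finset.prod_ne_zero_iff.mpr fun j _ => sub_ne_zero.mpr (hcc i j y (k j) ?_))
  intro hEq
  rw [Prod.mk.injEq] at hEq
  obtain ⟨h1, h2⟩ := hEq
  subst h1
  exact hy h2

lemma NB_c_zero (k : Fin n → ℤ) (i : Fin n) : NB n b c k (c i (k i)) = 0 := by
  unfold NB
  have h0 : (∏ j, (c i (k i) - c j (k j))) = 0 :=
    Finset.prod_eq_zero (Finset.mem_univ i) (sub_self _)
  rw [h0, mul_zero]

/-- `ff` rewritten via `NB`. -/
lemma ff_eq (m k : Fin n → ℤ) :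
    ff n b a c m k =
      ((∏ i : Fin n, (c i (k i))⁻¹) *
        (∏ i : Fin n, ∏ j ∈ Finset.Ioi i, (c i (k i) - c j (k j))⁻¹)) *
      (Matrix.det (Matrix.of fun i j : Fin n =>
        c i (m i) ^ (n - (j : ℕ)) -
          a i (m i) ^ (n - (j : ℕ)) * (NB n b c k (c i (m i)) / NB n b c k (a i (m i)))) *
      ∏ i : Fin n, ∏ y ∈ Finset.Icc (k i + 1) (m i),
        NB n b c k (a i y) / NB n b c k (c i y)) := by
  unfold ff NB
  rw [show ∀ A B D E : ℂ, A * B * D * E = A * B * (D * E) from fun _ _ _ _ => by ring]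
  congr 1
  congr 1
  · congr 1
    ext i j
    simp only [Matrix.of_apply]
    rw [mul_assoc, Finset.prod_div_distrib, div_mul_div_comm]
  · refine Finset.prod_congr rfl fun i _ => Finset.prod_congr rfl fun y _ => ?_
    rw [Finset.prod_div_distrib, div_mul_div_comm]

/-- `gg` rewritten via `NB` (definitional). -/
lemma gg_eq (k l : Fin n → ℤ) :
    gg n b a c k l = ∏ i : Fin n,
      (∏ y ∈ Finset.Icc (l i + 1) (k i), NB n b c k (a i y)) /
      (∏ y ∈ Finset.Icc (l i) (k i - 1), NB n b c k (c i y)) := rfl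

end facts

section GF
variable {n : ℕ} {b : ℂ} {a c : Fin n → ℤ → ℂ}

theorem GF (hc0 : ∀ i y, c i y ≠ 0)
    (hcc : ∀ (i j : Fin n) (y z : ℤ), (i, y) ≠ (j, z) → c i y ≠ c j z)
    (hac : ∀ (i j : Fin n) (y z : ℤ), a i y ≠ c j z)
    (hab : ∀ (i : Fin n) (y : ℤ) (k : Fin n → ℤ), a i y ≠ b / ∏ s, c s (k s))
    (hcb : ∀ (i : Fin n) (y : ℤ) (k : Fin n → ℤ), c i y ≠ b / ∏ s, c s (k s))
    (m l : Fin n → ℤ) (hml : ∀ i, l i ≤ m i) :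
    ∑ k ∈ Fintype.piFinset (fun i : Fin n => Finset.Icc (l i) (m i)),
      gg n b a c m k * ff n b a c k l = if m = l then 1 else 0 := by
  set V : ℂ := (∏ i : Fin n, (c i (l i))⁻¹) *
      (∏ i : Fin n, ∏ j ∈ Finset.Ioi i, (c i (l i) - c j (l j))⁻¹) with hV
  set w : Fin n → ℤ → ℂ := fun i t =>
      ((∏ y ∈ Finset.Icc (t + 1) (m i), NB n b c m (a i y)) /
        (∏ y ∈ Finset.Icc t (m i - 1), NB n b c m (c i y))) *
      (∏ y ∈ Finset.Icc (l i + 1) t, NB n b c l (a i y) / NB n b c l (c i y)) with hw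
  set R : Fin n → ℤ → Fin n → ℂ := fun i t j =>
      c i t ^ (n - (j : ℕ)) -
        a i t ^ (n - (j : ℕ)) * (NB n b c l (c i t) / NB n b c l (a i t)) with hR
  have hsummand : ∀ k, gg n b a c m k * ff n b a c k l
      = V * ((∏ i, w i (k i)) *
          Matrix.det (Matrix.of fun i j : Fin n => R i (k i) j)) := by
    intro k
    rw [gg_eq, ff_eq]
    rw [hw]
    simp only
    rw [Finset.prod_mul_distrib]
    ring
  rw [Finset.sum_congr rfl fun k _ => hsummand k, ← Finset.mul_sum, det_sum_exchange]
  by_cases hml' : m = l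
  · subst hml'
    -- diagonal case
    have hS : ∀ i j : Fin n, (∑ t ∈ Finset.Icc (m i) (m i), w i t * R i t j)
        = c i (m i) ^ (n - (j : ℕ)) := by
      intro i j
      rw [Finset.Icc_self, Finset.sum_singleton]
      have hw1 : w i (m i) = 1 := by
        rw [hw]; simp only
        rw [show Finset.Icc (m i + 1) (m i) = (∅ : Finset ℤ) from
            Finset.Icc_eq_empty (by omega), Finset.prod_empty,
          show Finset.Icc (m i) (m i - 1) = (∅ : Finset ℤ) from
            Finset.Icc_eq_empty (by omega), Finset.prod_empty]
        norm_num
      have hR1 : R i (m i) j = c i (m i) ^ (n - (j : ℕ)) := by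
        rw [hR]; simp only
        rw [NB_c_zero, zero_div, mul_zero, sub_zero]
      rw [hw1, hR1, one_mul]
    rw [show (Matrix.of fun i j : Fin n => ∑ t ∈ Finset.Icc (m i) (m i), w i t * R i t j)
        = Matrix.of fun i j : Fin n => c i (m i) ^ (n - (j : ℕ)) from by
      ext i j; simp only [Matrix.of_apply]; exact hS i j]
    rw [det_pow_rev (fun i => c i (m i)) (fun i => hc0 i (m i)), if_pos rfl, hV]
    have h1 : (∏ i : Fin n, (c i (m i))⁻¹) * (∏ i : Fin n, c i (m i)) = 1 := by
      rw [← Finset.prod_mul_distrib]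
      exact Finset.prod_eq_one fun i _ => inv_mul_cancel₀ (hc0 i (m i))
    have h2 : (∏ i : Fin n, ∏ j ∈ Finset.Ioi i, (c i (m i) - c j (m j))⁻¹) *
        (∏ i : Fin n, ∏ j ∈ Finset.Ioi i, (c i (m i) - c j (m j))) = 1 := by
      rw [← Finset.prod_mul_distrib]
      refine Finset.prod_eq_one fun i _ => ?_
      rw [← Finset.prod_mul_distrib]
      refine Finset.prod_eq_one fun j hj => ?_
      refine inv_mul_cancel₀ (sub_ne_zero.mpr (hcc i j (m i) (m j) ?_))
      simp only [Finset.mem_Ioi] at hj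
      intro hEq
      rw [Prod.mk.injEq] at hEq
      exact absurd hEq.1 (Fin.ne_of_lt hj)
    calc (∏ i : Fin n, (c i (m i))⁻¹) *
          (∏ i : Fin n, ∏ j ∈ Finset.Ioi i, (c i (m i) - c j (m j))⁻¹) *
          ((∏ i, c i (m i)) * ∏ i : Fin n, ∏ j ∈ Finset.Ioi i, (c i (m i) - c j (m j)))
        = ((∏ i : Fin n, (c i (m i))⁻¹) * (∏ i : Fin n, c i (m i))) *
          ((∏ i : Fin n, ∏ j ∈ Finset.Ioi i, (c i (m i) - c j (m j))⁻¹) *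
            (∏ i : Fin n, ∏ j ∈ Finset.Ioi i, (c i (m i) - c j (m j)))) := by ring
      _ = 1 := by rw [h1, h2, mul_one]
  · -- off-diagonal case
    rw [if_neg hml']
    have hex : ∃ i₀, l i₀ < m i₀ := by
      by_contra hcon
      push_neg at hcon
      exact hml' (funext fun i => le_antisymm (hcon i) (hml i))
    obtain ⟨i₀, hi₀⟩ := hex
    have hPd : (∏ s, c s (l s)) ≠ 0 := Finset.prod_ne_zero_iff.mpr fun s _ => hc0 s (l s)
    have hPe : (∏ s, c s (m s)) ≠ 0 := Finset.prod_ne_zero_iff.mpr fun s _ => hc0 s (m s)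
    have hb : (b / ∏ s, c s (l s)) * ∏ s, c s (l s)
        = (b / ∏ s, c s (m s)) * ∏ s, c s (m s) := by
      rw [div_mul_cancel₀ _ hPd, div_mul_cancel₀ _ hPe]
    obtain ⟨κ, hκ⟩ := poly_coeffs (b / ∏ s, c s (l s)) (b / ∏ s, c s (m s))
      (fun s => c s (l s)) (fun s => c s (m s)) hb
    have hκ' : ∀ z : ℂ, (∑ j : Fin n, κ j * z ^ (n - (j : ℕ)))
        = NB n b c l z - NB n b c m z := fun z => hκ z
    have hκne : κ ≠ 0 := by
      intro h0
      have h1 := hκ' (c i₀ (l i₀))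
      rw [h0] at h1
      simp only [Pi.zero_apply, zero_mul, Finset.sum_const_zero] at h1
      rw [NB_c_zero, zero_sub] at h1
      exact NB_c_ne hcb hcc m i₀ (l i₀) (by omega) (by rw [← neg_eq_zero, h1])
    have hnull : ∀ i : Fin n, (∑ j : Fin n,
        (∑ t ∈ Finset.Icc (l i) (m i), w i t * R i t j) * κ j) = 0 := by
      intro i
      have hswap : (∑ j : Fin n, (∑ t ∈ Finset.Icc (l i) (m i), w i t * R i t j) * κ j)
          = ∑ t ∈ Finset.Icc (l i) (m i), w i t * (∑ j : Fin n, κ j * R i t j) :=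
        calc (∑ j : Fin n, (∑ t ∈ Finset.Icc (l i) (m i), w i t * R i t j) * κ j)
            = ∑ j : Fin n, ∑ t ∈ Finset.Icc (l i) (m i), w i t * R i t j * κ j := by
              exact Finset.sum_congr rfl fun j _ => Finset.sum_mul _ _ _
          _ = ∑ t ∈ Finset.Icc (l i) (m i), ∑ j : Fin n, w i t * R i t j * κ j :=
              Finset.sum_comm
          _ = ∑ t ∈ Finset.Icc (l i) (m i), w i t * (∑ j : Fin n, κ j * R i t j) := by
              refine Finset.sum_congr rfl fun t _ => ?_
              rw [Finset.mul_sum]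
              exact Finset.sum_congr rfl fun j _ => by ring
      rw [hswap]
      have hinner : ∀ t : ℤ, (∑ j : Fin n, κ j * R i t j)
          = (NB n b c l (c i t) - NB n b c m (c i t))
            - (NB n b c l (a i t) - NB n b c m (a i t)) *
              (NB n b c l (c i t) / NB n b c l (a i t)) := by
        intro t
        rw [hR]
        simp only
        rw [show (∑ j : Fin n, κ j * (c i t ^ (n - (j : ℕ)) -
              a i t ^ (n - (j : ℕ)) * (NB n b c l (c i t) / NB n b c l (a i t))))
            = (∑ j : Fin n, κ j * c i t ^ (n - (j : ℕ)))
              - (∑ j : Fin n, κ j * a i t ^ (n - (j : ℕ))) *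
                (NB n b c l (c i t) / NB n b c l (a i t)) from by
          rw [Finset.sum_mul, ← Finset.sum_sub_distrib]
          exact Finset.sum_congr rfl fun j _ => by ring]
        rw [hκ' (c i t), hκ' (a i t)]
      have hstep : ∀ t : ℤ, w i t * (∑ j : Fin n, κ j * R i t j)
          = w i t * (NB n b c m (a i t) * NB n b c l (c i t) / NB n b c l (a i t)
              - NB n b c m (c i t)) := by
        intro t
        rw [hinner t]
        congr 1
        have hNA : NB n b c l (a i t) ≠ 0 := NB_a_ne hab hac l i t
        field_simp
        ring
      rw [Finset.sum_congr rfl fun t _ => hstep t]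
      by_cases hi : l i < m i
      · exact tele (l i) (m i) hi (a i) (c i) (NB n b c l) (NB n b c m)
          (NB_c_zero l i) (NB_c_zero m i)
          (fun y _ => NB_a_ne hab hac l i y)
          (fun y hy => NB_c_ne hcb hcc l i y (by simp only [Finset.mem_Icc] at hy; omega))
          (fun y hy => NB_c_ne hcb hcc m i y (by simp only [Finset.mem_Icc] at hy; omega))
      · have hieq : m i = l i := le_antisymm (by omega) (hml i)
        rw [show Finset.Icc (l i) (m i) = {l i} from by rw [hieq, Finset.Icc_self],
          Finset.sum_singleton]
        have hc1 : NB n b c l (c i (l i)) = 0 := NB_c_zero l i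
        have hc2 : NB n b c m (c i (l i)) = 0 := by
          rw [show c i (l i) = c i (m i) from by rw [hieq]]
          exact NB_c_zero m i
        rw [hc1, hc2, mul_zero, zero_div, sub_zero, mul_zero]
    have hdet : Matrix.det (Matrix.of fun i j : Fin n =>
        ∑ t ∈ Finset.Icc (l i) (m i), w i t * R i t j) = 0 := by
      rw [← Matrix.exists_mulVec_eq_zero_iff]
      refine ⟨κ, hκne, funext fun i => ?_⟩
      simp only [Matrix.mulVec, dotProduct, Matrix.of_apply, Pi.zero_apply]
      exact hnull i
    rw [hdet, mul_zero]

end GF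

section trans
variable {n : ℕ} {b : ℂ} {a c : Fin n → ℤ → ℂ}

lemma gg_diag (m : Fin n → ℤ) : gg n b a c m m = 1 := by
  unfold gg
  refine Finset.prod_eq_one fun i _ => ?_
  rw [show Finset.Icc (m i + 1) (m i) = (∅ : Finset ℤ) from Finset.Icc_eq_empty (by omega),
    show Finset.Icc (m i) (m i - 1) = (∅ : Finset ℤ) from Finset.Icc_eq_empty (by omega),
    Finset.prod_empty, Finset.prod_empty, div_one]

lemma ff_diag (hc0 : ∀ i y, c i y ≠ 0)
    (hcc : ∀ (i j : Fin n) (y z : ℤ), (i, y) ≠ (j, z) → c i y ≠ c j z)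
    (m : Fin n → ℤ) : ff n b a c m m = 1 := by
  rw [ff_eq]
  have hlast : (∏ i : Fin n, ∏ y ∈ Finset.Icc (m i + 1) (m i),
      NB n b c m (a i y) / NB n b c m (c i y)) = 1 :=
    Finset.prod_eq_one fun i _ => by
      rw [show Finset.Icc (m i + 1) (m i) = (∅ : Finset ℤ) from Finset.Icc_eq_empty (by omega),
        Finset.prod_empty]
  have hdet : (Matrix.of fun i j : Fin n =>
      c i (m i) ^ (n - (j : ℕ)) -
        a i (m i) ^ (n - (j : ℕ)) * (NB n b c m (c i (m i)) / NB n b c m (a i (m i))))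
      = Matrix.of fun i j : Fin n => c i (m i) ^ (n - (j : ℕ)) := by
    ext i j
    simp only [Matrix.of_apply]
    rw [NB_c_zero, zero_div, mul_zero, sub_zero]
  rw [hlast, hdet, det_pow_rev (fun i => c i (m i)) (fun i => hc0 i (m i)), mul_one]
  have h1 : (∏ i : Fin n, (c i (m i))⁻¹) * (∏ i : Fin n, c i (m i)) = 1 := by
    rw [← Finset.prod_mul_distrib]
    exact Finset.prod_eq_one fun i _ => inv_mul_cancel₀ (hc0 i (m i))
  have h2 : (∏ i : Fin n, ∏ j ∈ Finset.Ioi i, (c i (m i) - c j (m j))⁻¹) *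
      (∏ i : Fin n, ∏ j ∈ Finset.Ioi i, (c i (m i) - c j (m j))) = 1 := by
    rw [← Finset.prod_mul_distrib]
    refine Finset.prod_eq_one fun i _ => ?_
    rw [← Finset.prod_mul_distrib]
    refine Finset.prod_eq_one fun j hj => ?_
    refine inv_mul_cancel₀ (sub_ne_zero.mpr (hcc i j (m i) (m j) ?_))
    simp only [Finset.mem_Ioi] at hj
    intro hEq
    rw [Prod.mk.injEq] at hEq
    exact absurd hEq.1 (Fin.ne_of_lt hj)
  calc (∏ i : Fin n, (c i (m i))⁻¹) *
        (∏ i : Fin n, ∏ j ∈ Finset.Ioi i, (c i (m i) - c j (m j))⁻¹) *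
        ((∏ i, c i (m i)) * ∏ i : Fin n, ∏ j ∈ Finset.Ioi i, (c i (m i) - c j (m j)))
      = ((∏ i : Fin n, (c i (m i))⁻¹) * (∏ i : Fin n, c i (m i))) *
        ((∏ i : Fin n, ∏ j ∈ Finset.Ioi i, (c i (m i) - c j (m j))⁻¹) *
          (∏ i : Fin n, ∏ j ∈ Finset.Ioi i, (c i (m i) - c j (m j)))) := by ring
    _ = 1 := by rw [h1, h2, mul_one]

/-- the box as a piFinset -/
noncomputable def Box (l m : Fin n → ℤ) : Finset (Fin n → ℤ) :=
  Fintype.piFinset (fun i : Fin n => Finset.Icc (l i) (m i))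

lemma mem_Box {l m k : Fin n → ℤ} : k ∈ Box l m ↔ ∀ i, l i ≤ k i ∧ k i ≤ m i := by
  unfold Box
  rw [Fintype.mem_piFinset]
  simp only [Finset.mem_Icc]

lemma Box_self (l : Fin n → ℤ) : Box l l = {l} := by
  unfold Box
  rw [show (fun i : Fin n => Finset.Icc (l i) (l i)) = fun i => {l i} from
    funext fun i => Finset.Icc_self (l i)]
  exact Fintype.piFinset_singleton l

lemma box_fubini (l m : Fin n → ℤ) (F : (Fin n → ℤ) → (Fin n → ℤ) → ℂ) :
    ∑ k ∈ Box l m, ∑ r ∈ Box k m, F k r = ∑ r ∈ Box l m, ∑ k ∈ Box l r, F k r := by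
  have h1 : ∀ k ∈ Box l m, Box k m = (Box l m).filter (fun r => ∀ i, k i ≤ r i) := by
    intro k hk
    rw [mem_Box] at hk
    ext r
    rw [mem_Box, Finset.mem_filter, mem_Box]
    constructor
    · intro hr
      exact ⟨fun i => ⟨le_trans (hk i).1 (hr i).1, (hr i).2⟩, fun i => (hr i).1⟩
    · intro ⟨hr1, hr2⟩
      exact fun i => ⟨hr2 i, (hr1 i).2⟩
  have h2 : ∀ r ∈ Box l m, Box l r = (Box l m).filter (fun k => ∀ i, k i ≤ r i) := by
    intro r hr
    rw [mem_Box] at hr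
    ext k
    rw [mem_Box, Finset.mem_filter, mem_Box]
    constructor
    · intro hkk
      exact ⟨fun i => ⟨(hkk i).1, le_trans (hkk i).2 (hr i).2⟩, fun i => (hkk i).2⟩
    · intro ⟨hk1, hk2⟩
      exact fun i => ⟨(hk1 i).1, hk2 i⟩
  calc ∑ k ∈ Box l m, ∑ r ∈ Box k m, F k r
      = ∑ k ∈ Box l m, ∑ r ∈ Box l m, if (∀ i, k i ≤ r i) then F k r else 0 := by
        refine Finset.sum_congr rfl fun k hk => ?_
        rw [h1 k hk, Finset.sum_filter]
    _ = ∑ r ∈ Box l m, ∑ k ∈ Box l m, if (∀ i, k i ≤ r i) then F k r else 0 :=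
        Finset.sum_comm
    _ = ∑ r ∈ Box l m, ∑ k ∈ Box l r, F k r := by
        refine Finset.sum_congr rfl fun r hr => ?_
        rw [h2 r hr, Finset.sum_filter]

theorem FG_aux (hc0 : ∀ i y, c i y ≠ 0)
    (hcc : ∀ (i j : Fin n) (y z : ℤ), (i, y) ≠ (j, z) → c i y ≠ c j z)
    (hac : ∀ (i j : Fin n) (y z : ℤ), a i y ≠ c j z)
    (hab : ∀ (i : Fin n) (y : ℤ) (k : Fin n → ℤ), a i y ≠ b / ∏ s, c s (k s))
    (hcb : ∀ (i : Fin n) (y : ℤ) (k : Fin n → ℤ), c i y ≠ b / ∏ s, c s (k s)) :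
    ∀ N : ℕ, ∀ m l : Fin n → ℤ, (∀ i, l i ≤ m i) → ((∑ i, (m i - l i)).toNat = N) →
      ∑ k ∈ Box l m, ff n b a c m k * gg n b a c k l = if m = l then 1 else 0 := by
  intro N
  induction N using Nat.strong_induction_on with
  | _ N IH =>
    intro m l hml hN
    by_cases hml' : m = l
    · subst hml'
      rw [Box_self, Finset.sum_singleton, ff_diag hc0 hcc, gg_diag, one_mul, if_pos rfl]
    · rw [if_neg hml']
      -- step 1 : ∑_{k ∈ Box l m} Su m k * ff k l = ff m l
      have step1 : ∑ k ∈ Box l m,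
          (∑ r ∈ Box k m, ff n b a c m r * gg n b a c r k) * ff n b a c k l
          = ff n b a c m l := by
        have e1 : ∀ k, (∑ r ∈ Box k m, ff n b a c m r * gg n b a c r k) * ff n b a c k l
            = ∑ r ∈ Box k m, ff n b a c m r * gg n b a c r k * ff n b a c k l :=
          fun k => Finset.sum_mul _ _ _
        rw [Finset.sum_congr rfl fun k _ => e1 k,
          box_fubini l m (fun k r => ff n b a c m r * gg n b a c r k * ff n b a c k l)]
        have e2 : ∀ r ∈ Box l m, (∑ k ∈ Box l r,
            ff n b a c m r * gg n b a c r k * ff n b a c k l)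
            = ff n b a c m r * (if r = l then 1 else 0) := by
          intro r hr
          rw [mem_Box] at hr
          rw [show (∑ k ∈ Box l r, ff n b a c m r * gg n b a c r k * ff n b a c k l)
              = ff n b a c m r * ∑ k ∈ Box l r, gg n b a c r k * ff n b a c k l from by
            rw [Finset.mul_sum]; exact Finset.sum_congr rfl fun k _ => by ring]
          rw [show (∑ k ∈ Box l r, gg n b a c r k * ff n b a c k l)
              = if r = l then 1 else 0 from GF hc0 hcc hac hab hcb r l (fun i => (hr i).1)]
        rw [Finset.sum_congr (rfl : Box l m = Box l m) e2]
        rw [Finset.sum_eq_single_of_mem l (mem_Box.mpr fun i => ⟨le_rfl, hml i⟩)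
          (fun r _ hr => by rw [if_neg hr, mul_zero])]
        rw [if_pos rfl, mul_one]
      -- step 2
      have step2 : ∑ k ∈ Box l m, (if m = k then (1:ℂ) else 0) * ff n b a c k l
          = ff n b a c m l := by
        rw [Finset.sum_eq_single_of_mem m (mem_Box.mpr fun i => ⟨hml i, le_rfl⟩)
          (fun k _ hk => by rw [if_neg (fun hh => hk hh.symm), zero_mul])]
        rw [if_pos rfl, one_mul]
      -- step 3 : induction hypothesis
      have step3 : ∀ k ∈ Box l m, k ≠ l →
          (∑ r ∈ Box k m, ff n b a c m r * gg n b a c r k) = if m = k then 1 else 0 := by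
        intro k hk hkl
        rw [mem_Box] at hk
        have hlt : (∑ i, (m i - k i)).toNat < N := by
          have hsum : (∑ i, (m i - k i)) < ∑ i, (m i - l i) := by
            refine Finset.sum_lt_sum (fun i _ => by have := (hk i).1; omega) ?_
            have : ∃ i, k i ≠ l i := by
              by_contra hcon
              push_neg at hcon
              exact hkl (funext hcon)
            obtain ⟨i, hi⟩ := this
            exact ⟨i, Finset.mem_univ i, by have h1 := (hk i).1; have h2 := (hk i).2; omega⟩
          have hnn : (0:ℤ) ≤ ∑ i, (m i - k i) :=
            Finset.sum_nonneg fun i _ => by have := (hk i).2; omega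
          omega
        exact IH _ hlt m k (fun i => (hk i).2) rfl
      -- combine
      have combined : ∑ k ∈ Box l m,
          ((∑ r ∈ Box k m, ff n b a c m r * gg n b a c r k) - (if m = k then 1 else 0)) *
            ff n b a c k l = 0 := by
        rw [Finset.sum_congr (rfl : Box l m = Box l m) fun k _ => sub_mul _ _ _,
          Finset.sum_sub_distrib, step1, step2, sub_self]
      have hsingle : ∑ k ∈ Box l m,
          ((∑ r ∈ Box k m, ff n b a c m r * gg n b a c r k) - (if m = k then 1 else 0)) *
            ff n b a c k l
          = ((∑ r ∈ Box l m, ff n b a c m r * gg n b a c r l) - (if m = l then 1 else 0)) *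
            ff n b a c l l :=
        Finset.sum_eq_single_of_mem l (mem_Box.mpr fun i => ⟨le_rfl, hml i⟩)
          (fun k hk hkl => by rw [step3 k hk hkl, sub_self, zero_mul])
      rw [hsingle] at combined
      rw [ff_diag hc0 hcc, mul_one, if_neg hml', sub_zero] at combined
      exact combined

end trans


end LSAux

open LSAux in
/-- The multidimensional matrix inverse of Lassalle–Schlosser (Theorem A.1):
the matrices `f` and `g` below are mutually inverse lower-triangular
`n`-dimensional matrices. -/
theorem multidimensional_matrix_inverse
    (n : ℕ) (hn : 1 ≤ n) (b : ℂ) (a c : Fin n → ℤ → ℂ)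
    (ha0 : ∀ i y, a i y ≠ 0) (hc0 : ∀ i y, c i y ≠ 0)
    (hcc : ∀ (i j : Fin n) (y z : ℤ), (i, y) ≠ (j, z) → c i y ≠ c j z)
    (hac : ∀ (i j : Fin n) (y z : ℤ), a i y ≠ c j z)
    (hab : ∀ (i : Fin n) (y : ℤ) (k : Fin n → ℤ), a i y ≠ b / ∏ s, c s (k s))
    (hcb : ∀ (i : Fin n) (y : ℤ) (k : Fin n → ℤ), c i y ≠ b / ∏ s, c s (k s)) :
    ∀ m l : Fin n → ℤ, (∀ i, l i ≤ m i) →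
      (∑ k ∈ Fintype.piFinset (fun i : Fin n => Finset.Icc (l i) (m i)),
        -- f_{m,k}
        (((∏ i : Fin n, (c i (k i))⁻¹) *
          (∏ i : Fin n, ∏ j ∈ Finset.Ioi i, (c i (k i) - c j (k j))⁻¹) *
          Matrix.det (Matrix.of fun i j : Fin n =>
            c i (m i) ^ (n - (j : ℕ)) -
              a i (m i) ^ (n - (j : ℕ)) *
                ((c i (m i) - b / ∏ s, c s (k s)) /
                  (a i (m i) - b / ∏ s, c s (k s))) *
                ∏ s : Fin n, (c i (m i) - c s (k s)) / (a i (m i) - c s (k s))) *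
          ∏ i : Fin n, ∏ y ∈ Finset.Icc (k i + 1) (m i),
            ((a i y - b / ∏ j, c j (k j)) / (c i y - b / ∏ j, c j (k j)) *
              ∏ j : Fin n, (a i y - c j (k j)) / (c i y - c j (k j)))) *
        -- g_{k,l}
         ∏ i : Fin n,
           (∏ y ∈ Finset.Icc (l i + 1) (k i),
             ((a i y - b / ∏ j, c j (k j)) * ∏ j : Fin n, (a i y - c j (k j)))) /
           (∏ y ∈ Finset.Icc (l i) (k i - 1),
             ((c i y - b / ∏ j, c j (k j)) * ∏ j : Fin n, (c i y - c j (k j))))))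
      = if m = l then 1 else 0 := by
  intro m l hml
  exact FG_aux hc0 hcc hac hab hcb ((∑ i, (m i - l i)).toNat) m l hml rfl
end
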